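/- arXiv:1505.03827 — 10 statements merged into one kernel-verified Lean document; each statement's English description precedes it below -/
import Mathlib

section
/- For the scaled bacteria-phage system, the weighted total F(t) = Σ_i H_i(t) + Σ_i P_i(t)/(e_i n_i) satisfies F(t) ≤ Q/W + (F(0) − Q/W) e^{−W t} for all t ≥ 0, where W = min_i n_i, K = max_i{H_i(0), r_i/a_i}, and Q = Σ_i (W + r_i) K. Consequently limsup_{t→∞} F(t) ≤ Σ_i (1 + r_i/W) r_i/a_i. -/
/-!
The bacteria satisfy `H_i' = H_i g_i` with `g_i` continuous, and so do the phages, so all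
populations stay nonnegative (a solution that reaches zero stays there by Grönwall). Dropping
predation and competition from other strains then gives the logistic inequality
`H_i' ≤ H_i (r_i - a_i H_i)`: hence `H_i ≤ K` for all time, and `H_i ≤ r_i/a_i + ε` eventually,
since above that level `H_i` decreases at a uniform rate.

In `F` the predation terms cancel, and the phage death terms are at least `W` times the phage
part of `F` because `W ≤ n_i`. Thus `F' ≤ Σ (W + r_i) H_i - W F`, and the linear Grönwall
inequality gives the exponential bound; applied from a time after which `H_i ≤ r_i/a_i + ε`,
it gives the `limsup` bound as `ε → 0`.
-/

open Filter Finset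

/-- The weighted total `F(t) = Σ H_i(t) + Σ P_i(t)/(e_i n_i)`. -/
noncomputable def Ftot (n : ℕ) (e ν : ℕ → ℝ) (H P : ℝ → ℕ → ℝ) (t : ℝ) : ℝ :=
  ∑ i ∈ Finset.range n, H t i + ∑ i ∈ Finset.range n, P t i / (e i * ν i)

open Set Real Topology

section Comparison

variable {f φ : ℝ → ℝ} {t₀ : ℝ}

theorem nonneg_of_hasDerivAt_mul {g : ℝ → ℝ} (hg : ContinuousOn g (Ici t₀))
    (hf : ∀ t ≥ t₀, HasDerivAt f (f t * g t) t) (h₀ : 0 ≤ f t₀) : ∀ t ≥ t₀, 0 ≤ f t := by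
  intro b hb
  by_contra! hneg
  have hfc : ContinuousOn f (Icc t₀ b) := fun x hx => (hf x hx.1).continuousAt.continuousWithinAt
  obtain ⟨s, hs, hfs⟩ := intermediate_value_Icc' hb hfc ⟨hneg.le, h₀⟩
  obtain ⟨C, hC⟩ := isCompact_Icc.exists_bound_of_continuousOn
    (hg.mono fun x hx => hs.1.trans hx.1 : ContinuousOn g (Icc s b))
  -- once `f` vanishes, `|f'| ≤ C |f|` keeps it at zero
  have hzero := eq_zero_of_abs_deriv_le_mul_abs_self_of_eq_zero_right (K := C)
    (fun x hx => (hf x (hs.1.trans hx.1)).continuousAt.continuousWithinAt)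
    (fun x hx => (hf x (hs.1.trans hx.1)).hasDerivWithinAt) hfs
    (fun x hx => by
      rw [norm_mul, mul_comm]
      exact mul_le_mul_of_nonneg_right (hC x (Ico_subset_Icc_self hx)) (norm_nonneg _))
    b ⟨hs.2, le_rfl⟩
  linarith

theorem le_of_hasDerivAt_neg_of_gt {c : ℝ} (hf : ∀ t ≥ t₀, HasDerivAt f (φ t) t)
    (hneg : ∀ t ≥ t₀, c < f t → φ t < 0) (h₀ : f t₀ ≤ c) : ∀ t ≥ t₀, f t ≤ c := by
  intro t ht
  refine le_of_forall_gt_imp_ge_of_dense fun c' hc' => ?_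
  exact image_le_of_deriv_right_lt_deriv_boundary (B := fun _ => c') (B' := fun _ => 0)
    (fun x hx => (hf x hx.1).continuousAt.continuousWithinAt)
    (fun x hx => (hf x hx.1).hasDerivWithinAt) (h₀.trans hc'.le)
    (fun x => hasDerivAt_const x c') (fun x hx hx' => hneg x hx.1 (hx' ▸ hc'))
    ⟨ht, le_rfl⟩

theorem exists_le_of_hasDerivAt_le_neg {c δ : ℝ} (hδ : 0 < δ)
    (hf : ∀ t ≥ t₀, HasDerivAt f (φ t) t) (hneg : ∀ t ≥ t₀, c < f t → φ t ≤ -δ) :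
    ∃ T ≥ t₀, f T ≤ c := by
  by_contra! hgt
  set T := t₀ + (f t₀ - c) / δ
  have hT : t₀ ≤ T := le_add_of_nonneg_right (div_nonneg (sub_nonneg.2 (hgt t₀ le_rfl).le) hδ.le)
  have hlin := image_le_of_deriv_right_le_deriv_boundary (f' := φ)
    (B := fun t => f t₀ - δ * (t - t₀)) (B' := fun _ => -δ)
    (fun x hx => (hf x hx.1).continuousAt.continuousWithinAt)
    (fun x hx => (hf x hx.1).hasDerivWithinAt) (by simp) (by fun_prop)
    (fun x _ => by simpa using ((hasDerivAt_id x).sub_const t₀).const_mul δ |>.const_sub (f t₀)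
      |>.hasDerivWithinAt)
    (fun x hx => hneg x hx.1 (hgt x hx.1)) ⟨hT, le_rfl⟩
  have : f t₀ - δ * (T - t₀) = c := by simp only [T]; field_simp; ring
  linarith [hgt T hT]

theorem eventually_le_of_hasDerivAt_le_neg {c δ : ℝ} (hδ : 0 < δ)
    (hf : ∀ t ≥ t₀, HasDerivAt f (φ t) t) (hneg : ∀ t ≥ t₀, c < f t → φ t ≤ -δ) :
    ∀ᶠ t in atTop, f t ≤ c := by
  obtain ⟨T, hT, hfT⟩ := exists_le_of_hasDerivAt_le_neg hδ hf hneg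
  exact eventually_atTop.2 ⟨T, le_of_hasDerivAt_neg_of_gt (fun t ht => hf t (hT.trans ht))
    (fun t ht hc => (hneg t (hT.trans ht) hc).trans_lt (neg_neg_of_pos hδ)) hfT⟩

theorem le_of_hasDerivAt_le_sub_mul {Q W : ℝ} (hW : W ≠ 0) (hf : ∀ t ≥ t₀, HasDerivAt f (φ t) t)
    (hφ : ∀ t ≥ t₀, φ t ≤ Q - W * f t) :
    ∀ t ≥ t₀, f t ≤ Q / W + (f t₀ - Q / W) * exp (-W * (t - t₀)) := by
  intro t ht
  have h := le_gronwallBound_of_liminf_deriv_right_le (f' := φ) (K := -W) (ε := Q) (b := t)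
    (fun x hx => (hf x hx.1).continuousAt.continuousWithinAt)
    (fun x hx _ hr => (hf x hx.1).hasDerivWithinAt.liminf_right_slope_le hr) le_rfl
    (fun x hx => by linarith [hφ x hx.1]) t ⟨ht, le_rfl⟩
  rw [gronwallBound_of_K_ne_0 (neg_ne_zero.2 hW)] at h
  convert h using 1
  field_simp
  ring

theorem limsup_le_of_le_add_mul_exp {A B W T m : ℝ} (hW : 0 < W)
    (hm : ∀ᶠ t in atTop, m ≤ f t) (hf : ∀ t ≥ T, f t ≤ A + B * exp (-W * (t - T))) :
    limsup f atTop ≤ A := by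
  have hlim : Tendsto (fun t => A + B * exp (-W * (t - T))) atTop (𝓝 A) := by
    have : Tendsto (fun t => -W * (t - T)) atTop atBot :=
      (tendsto_atTop_add_const_right atTop (-T) tendsto_id).const_mul_atTop_of_neg
        (neg_neg_of_pos hW) |>.congr fun t => by simp only [id]; ring
    simpa using (tendsto_exp_atBot.comp this).const_mul B |>.const_add A
  calc limsup f atTop ≤ limsup (fun t => A + B * exp (-W * (t - T))) atTop :=
        limsup_le_limsup (eventually_atTop.2 ⟨T, hf⟩)
          (isCoboundedUnder_le_of_eventually_le atTop hm) hlim.isBoundedUnder_le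
    _ = A := hlim.limsup_eq

end Comparison

theorem logistic_lt_of_lt {r a c x : ℝ} (ha : 0 < a) (hc : 0 ≤ c) (hrc : r ≤ a * c) (hx : c < x) :
    x * (r - a * x) < c * (r - a * c) := by
  nlinarith [mul_pos ha (sub_pos.2 hx)]

section BacteriaPhage

variable {n : ℕ} {r a e ν : ℕ → ℝ} {M : ℕ → ℕ → ℝ} {H P : ℝ → ℕ → ℝ}

def bacteriaRate (n : ℕ) (r a : ℕ → ℝ) (M : ℕ → ℕ → ℝ) (H P : ℝ → ℕ → ℝ) (t : ℝ) (i : ℕ) : ℝ :=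
  H t i * (r i - ∑ j ∈ range n, a j * H t j) - H t i * ∑ j ∈ range n, M i j * P t j

noncomputable def phageRate (n : ℕ) (e ν : ℕ → ℝ) (M : ℕ → ℕ → ℝ) (H P : ℝ → ℕ → ℝ) (t : ℝ)
    (i : ℕ) : ℝ :=
  e i * ν i * P t i * ((∑ j ∈ range n, M j i * H t j) - 1 / e i)

theorem bacteriaRate_le_logistic {t : ℝ} {i : ℕ} (hi : i < n) (ha : ∀ j < n, 0 ≤ a j)
    (hM : ∀ j < n, 0 ≤ M i j) (hH : ∀ j < n, 0 ≤ H t j) (hP : ∀ j < n, 0 ≤ P t j) :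
    bacteriaRate n r a M H P t i ≤ H t i * (r i - a i * H t i) := by
  have hself : a i * H t i ≤ ∑ j ∈ range n, a j * H t j :=
    single_le_sum (f := fun j => a j * H t j)
      (fun j hj => mul_nonneg (ha j (mem_range.1 hj)) (hH j (mem_range.1 hj))) (mem_range.2 hi)
  have hpred : 0 ≤ ∑ j ∈ range n, M i j * P t j :=
    sum_nonneg fun j hj => mul_nonneg (hM j (mem_range.1 hj)) (hP j (mem_range.1 hj))
  unfold bacteriaRate
  nlinarith [mul_nonneg (hH i hi) (sub_nonneg.2 hself), mul_nonneg (hH i hi) hpred]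

structure IsBacteriaPhageSolution (n : ℕ) (r a e ν : ℕ → ℝ) (M : ℕ → ℕ → ℝ)
    (H P : ℝ → ℕ → ℝ) : Prop where
  hasDerivAt_H : ∀ t ≥ (0:ℝ), ∀ i < n,
    HasDerivAt (fun s => H s i) (bacteriaRate n r a M H P t i) t
  hasDerivAt_P : ∀ t ≥ (0:ℝ), ∀ i < n,
    HasDerivAt (fun s => P s i) (phageRate n e ν M H P t i) t

namespace IsBacteriaPhageSolution

theorem continuousOn_H (hs : IsBacteriaPhageSolution n r a e ν M H P) {j : ℕ} (hj : j < n) :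
    ContinuousOn (fun t => H t j) (Ici 0) :=
  fun t ht => (hs.hasDerivAt_H t ht j hj).continuousAt.continuousWithinAt

theorem continuousOn_P (hs : IsBacteriaPhageSolution n r a e ν M H P) {j : ℕ} (hj : j < n) :
    ContinuousOn (fun t => P t j) (Ici 0) :=
  fun t ht => (hs.hasDerivAt_P t ht j hj).continuousAt.continuousWithinAt

theorem H_nonneg (hs : IsBacteriaPhageSolution n r a e ν M H P) {i : ℕ} (hi : i < n)
    (h₀ : 0 ≤ H 0 i) : ∀ t ≥ 0, 0 ≤ H t i := by
  refine nonneg_of_hasDerivAt_mul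
    (g := fun t => r i - ∑ j ∈ range n, a j * H t j - ∑ j ∈ range n, M i j * P t j)
    ?_ (fun t ht => (hs.hasDerivAt_H t ht i hi).congr_deriv (by simp only [bacteriaRate]; ring)) h₀
  exact (continuousOn_const.sub (continuousOn_finsetSum _ fun j hj =>
    continuousOn_const.mul (hs.continuousOn_H (mem_range.1 hj)))).sub
    (continuousOn_finsetSum _ fun j hj =>
      continuousOn_const.mul (hs.continuousOn_P (mem_range.1 hj)))

theorem P_nonneg (hs : IsBacteriaPhageSolution n r a e ν M H P) {i : ℕ} (hi : i < n)
    (h₀ : 0 ≤ P 0 i) : ∀ t ≥ 0, 0 ≤ P t i := by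
  refine nonneg_of_hasDerivAt_mul
    (g := fun t => e i * ν i * ((∑ j ∈ range n, M j i * H t j) - 1 / e i))
    ?_ (fun t ht => (hs.hasDerivAt_P t ht i hi).congr_deriv (by simp only [phageRate]; ring)) h₀
  exact continuousOn_const.mul ((continuousOn_finsetSum _ fun j hj =>
    continuousOn_const.mul (hs.continuousOn_H (mem_range.1 hj))).sub continuousOn_const)

theorem nonneg (hs : IsBacteriaPhageSolution n r a e ν M H P)
    (h₀ : ∀ j < n, 0 ≤ H 0 j ∧ 0 ≤ P 0 j) {t : ℝ} (ht : 0 ≤ t) {j : ℕ} (hj : j < n) :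
    0 ≤ H t j ∧ 0 ≤ P t j :=
  ⟨hs.H_nonneg hj (h₀ j hj).1 t ht, hs.P_nonneg hj (h₀ j hj).2 t ht⟩

theorem bacteriaRate_le (hs : IsBacteriaPhageSolution n r a e ν M H P)
    (ha : ∀ j < n, 0 ≤ a j) (hM : ∀ i j, 0 ≤ M i j) (h₀ : ∀ j < n, 0 ≤ H 0 j ∧ 0 ≤ P 0 j)
    {t : ℝ} (ht : 0 ≤ t) {i : ℕ} (hi : i < n) :
    bacteriaRate n r a M H P t i ≤ H t i * (r i - a i * H t i) :=
  bacteriaRate_le_logistic hi ha (fun j _ => hM i j) (fun _ hj => (hs.nonneg h₀ ht hj).1)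
    (fun _ hj => (hs.nonneg h₀ ht hj).2)

theorem H_le (hs : IsBacteriaPhageSolution n r a e ν M H P)
    (ha : ∀ j < n, 0 ≤ a j) (hM : ∀ i j, 0 ≤ M i j) (h₀ : ∀ j < n, 0 ≤ H 0 j ∧ 0 ≤ P 0 j)
    {i : ℕ} (hi : i < n) {c : ℝ} (hai : 0 < a i) (hc : 0 ≤ c) (hrc : r i ≤ a i * c)
    (hHc : H 0 i ≤ c) : ∀ t ≥ 0, H t i ≤ c :=
  le_of_hasDerivAt_neg_of_gt (fun t ht => hs.hasDerivAt_H t ht i hi)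
    (fun t ht hct => ((hs.bacteriaRate_le ha hM h₀ ht hi).trans_lt
      (logistic_lt_of_lt hai hc hrc hct)).trans_le
      (mul_nonpos_of_nonneg_of_nonpos hc (by linarith))) hHc

theorem eventually_H_le (hs : IsBacteriaPhageSolution n r a e ν M H P)
    (ha : ∀ j < n, 0 ≤ a j) (hM : ∀ i j, 0 ≤ M i j) (h₀ : ∀ j < n, 0 ≤ H 0 j ∧ 0 ≤ P 0 j)
    {i : ℕ} (hi : i < n) {c : ℝ} (hai : 0 < a i) (hc : 0 < c) (hrc : r i < a i * c) :
    ∀ᶠ t in atTop, H t i ≤ c :=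
  eventually_le_of_hasDerivAt_le_neg (mul_pos hc (sub_pos.2 hrc))
    (fun t ht => hs.hasDerivAt_H t ht i hi)
    (fun t ht hct => ((hs.bacteriaRate_le ha hM h₀ ht hi).trans_lt
      (logistic_lt_of_lt hai hc.le hrc.le hct)).le.trans_eq (by ring))

-- the predation terms cancel: what the bacteria lose is what the phages gain
theorem hasDerivAt_Ftot (hs : IsBacteriaPhageSolution n r a e ν M H P)
    (he : ∀ i < n, e i ≠ 0) (hν : ∀ i < n, ν i ≠ 0) {t : ℝ} (ht : 0 ≤ t) :
    HasDerivAt (Ftot n e ν H P)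
      (∑ i ∈ range n, H t i * (r i - ∑ j ∈ range n, a j * H t j) - ∑ i ∈ range n, P t i / e i)
      t := by
  have hsum := (HasDerivAt.fun_sum fun i hi => hs.hasDerivAt_H t ht i (mem_range.1 hi)).add
    (HasDerivAt.fun_sum fun i hi => (hs.hasDerivAt_P t ht i (mem_range.1 hi)).div_const (e i * ν i))
  refine hsum.congr_deriv ?_
  have hphage : ∀ i ∈ range n, phageRate n e ν M H P t i / (e i * ν i)
      = P t i * ∑ j ∈ range n, M j i * H t j - P t i / e i := fun i hi => by
    have := he i (mem_range.1 hi)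
    have := hν i (mem_range.1 hi)
    simp only [phageRate]
    field_simp
  have hswap : ∑ i ∈ range n, H t i * ∑ j ∈ range n, M i j * P t j
      = ∑ i ∈ range n, P t i * ∑ j ∈ range n, M j i * H t j := by
    simp only [mul_sum]
    rw [sum_comm]
    exact sum_congr rfl fun i _ => sum_congr rfl fun j _ => by ring
  simp only [sum_congr rfl hphage, bacteriaRate, sum_sub_distrib, hswap]
  ring

theorem Ftot_nonneg (hs : IsBacteriaPhageSolution n r a e ν M H P)
    (he : ∀ i < n, 0 < e i) (hν : ∀ i < n, 0 < ν i) (h₀ : ∀ j < n, 0 ≤ H 0 j ∧ 0 ≤ P 0 j)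
    {t : ℝ} (ht : 0 ≤ t) : 0 ≤ Ftot n e ν H P t :=
  add_nonneg (sum_nonneg fun _ hi => (hs.nonneg h₀ ht (mem_range.1 hi)).1)
    (sum_nonneg fun i hi => div_nonneg (hs.nonneg h₀ ht (mem_range.1 hi)).2
      (mul_pos (he i (mem_range.1 hi)) (hν i (mem_range.1 hi))).le)

theorem Ftot_le (hs : IsBacteriaPhageSolution n r a e ν M H P)
    (ha : ∀ j < n, 0 ≤ a j) (he : ∀ i < n, 0 < e i) (hν : ∀ i < n, 0 < ν i)
    (h₀ : ∀ j < n, 0 ≤ H 0 j ∧ 0 ≤ P 0 j) {W : ℝ} (hW : W ≠ 0) (hWν : ∀ i < n, W ≤ ν i)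
    (hWr : ∀ i < n, 0 ≤ W + r i) {κ : ℕ → ℝ} {t₀ : ℝ} (ht₀ : 0 ≤ t₀)
    (hκ : ∀ t ≥ t₀, ∀ i < n, H t i ≤ κ i) :
    ∀ t ≥ t₀, Ftot n e ν H P t ≤ (∑ i ∈ range n, (W + r i) * κ i) / W
      + (Ftot n e ν H P t₀ - (∑ i ∈ range n, (W + r i) * κ i) / W) * exp (-W * (t - t₀)) := by
  refine le_of_hasDerivAt_le_sub_mul hW (fun t ht => hs.hasDerivAt_Ftot
    (fun i hi => (he i hi).ne') (fun i hi => (hν i hi).ne') (ht₀.trans ht)) fun t ht => ?_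
  have hnn := fun {i} (hi : i < n) => hs.nonneg h₀ (ht₀.trans ht) hi
  have hbact : ∑ i ∈ range n, (H t i * (r i - ∑ j ∈ range n, a j * H t j) + W * H t i)
      ≤ ∑ i ∈ range n, (W + r i) * κ i := sum_le_sum fun i hi => by
    have hi := mem_range.1 hi
    have hS : 0 ≤ ∑ j ∈ range n, a j * H t j :=
      sum_nonneg fun j hj => mul_nonneg (ha j (mem_range.1 hj)) (hnn (mem_range.1 hj)).1
    nlinarith [mul_nonneg (hnn hi).1 hS, mul_le_mul_of_nonneg_left (hκ t ht i hi) (hWr i hi)]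
  have hphage : ∑ i ∈ range n, W * (P t i / (e i * ν i)) ≤ ∑ i ∈ range n, P t i / e i :=
    sum_le_sum fun i hi => by
      have hi := mem_range.1 hi
      calc W * (P t i / (e i * ν i)) ≤ ν i * (P t i / (e i * ν i)) :=
            mul_le_mul_of_nonneg_right (hWν i hi)
              (div_nonneg (hnn hi).2 (mul_pos (he i hi) (hν i hi)).le)
        _ = P t i / e i := by field_simp [(he i hi).ne', (hν i hi).ne']
  rw [sum_add_distrib, ← mul_sum] at hbact
  rw [← mul_sum] at hphage
  unfold Ftot
  linarith

theorem limsup_Ftot_le (hs : IsBacteriaPhageSolution n r a e ν M H P)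
    (ha : ∀ j < n, 0 < a j) (hM : ∀ i j, 0 ≤ M i j) (he : ∀ i < n, 0 < e i)
    (hν : ∀ i < n, 0 < ν i) (h₀ : ∀ j < n, 0 ≤ H 0 j ∧ 0 ≤ P 0 j) {W : ℝ} (hW : 0 < W)
    (hWν : ∀ i < n, W ≤ ν i) (hr : ∀ i < n, 0 ≤ r i) {ε : ℝ} (hε : 0 < ε) :
    limsup (Ftot n e ν H P) atTop ≤ (∑ i ∈ range n, (W + r i) * (r i / a i + ε)) / W := by
  have ha₀ : ∀ j < n, 0 ≤ a j := fun j hj => (ha j hj).le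
  obtain ⟨T, hT⟩ := eventually_atTop.1 <| (eventually_all_finset (range n)).2 fun i hi =>
    have hi := Finset.mem_range.1 hi
    hs.eventually_H_le (c := r i / a i + ε) ha₀ hM h₀ hi (ha i hi)
      (add_pos_of_nonneg_of_pos (div_nonneg (hr i hi) (ha₀ i hi)) hε)
      (by rw [mul_add, mul_div_cancel₀ _ (ha i hi).ne']; linarith [mul_pos (ha i hi) hε])
  exact limsup_le_of_le_add_mul_exp hW
    (eventually_atTop.2 ⟨0, fun t ht => hs.Ftot_nonneg he hν h₀ ht⟩)
    (hs.Ftot_le ha₀ he hν h₀ hW.ne' hWν (fun i hi => by linarith [hr i hi]) (le_max_right T 0)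
      (fun t ht i hi => hT t (le_of_max_le_left ht) i (mem_range.2 hi)))

end IsBacteriaPhageSolution

/-- `F(t) ≤ Q/W + (F(0) − Q/W) e^{−Wt}` where `W = min_i n_i`,
`K = max_i {H_i(0), r_i/a_i}`, `Q = Σ_i (W + r_i) K`; consequently
`limsup_{t→∞} F(t) ≤ Σ_i (1 + r_i/W) r_i/a_i`. -/
theorem statement1
    (n : ℕ) (hn : 0 < n) (r a e ν : ℕ → ℝ) (M : ℕ → ℕ → ℝ)
    (hr : ∀ i < n, 0 < r i) (ha : ∀ i < n, 0 < a i)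
    (he : ∀ i < n, 0 < e i) (hν : ∀ i < n, 0 < ν i)
    (hM : ∀ i j, M i j = 0 ∨ M i j = 1)
    (H P : ℝ → ℕ → ℝ)
    (hH : ∀ t ≥ (0:ℝ), ∀ i < n, HasDerivAt (fun s => H s i)
      (H t i * (r i - ∑ j ∈ Finset.range n, a j * H t j)
        - H t i * ∑ j ∈ Finset.range n, M i j * P t j) t)
    (hP : ∀ t ≥ (0:ℝ), ∀ i < n, HasDerivAt (fun s => P s i)
      (e i * ν i * P t i * ((∑ j ∈ Finset.range n, M j i * H t j) - 1 / e i)) t)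
    (h0 : ∀ i < n, 0 ≤ H 0 i ∧ 0 ≤ P 0 i)
    (W K Q : ℝ)
    (hW : W = (Finset.range n).inf' (Finset.nonempty_range_iff.mpr hn.ne') ν)
    (hK : K = (Finset.range n).sup' (Finset.nonempty_range_iff.mpr hn.ne')
      (fun i => max (H 0 i) (r i / a i)))
    (hQ : Q = ∑ i ∈ Finset.range n, (W + r i) * K) :
    (∀ t ≥ (0:ℝ), Ftot n e ν H P t ≤ Q / W + (Ftot n e ν H P 0 - Q / W) * Real.exp (-W * t)) ∧
    Filter.limsup (Ftot n e ν H P) Filter.atTop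
      ≤ ∑ i ∈ Finset.range n, (1 + r i / W) * (r i / a i) := by
  have hs : IsBacteriaPhageSolution n r a e ν M H P := ⟨hH, hP⟩
  have hM₀ : ∀ i j, 0 ≤ M i j := fun i j => by rcases hM i j with h | h <;> simp [h]
  have hW₀ : 0 < W := hW ▸ (lt_inf'_iff _).2 fun i hi => hν i (mem_range.1 hi)
  have hWν : ∀ i < n, W ≤ ν i := fun i hi => hW ▸ inf'_le ν (mem_range.2 hi)
  have hKi : ∀ i < n, max (H 0 i) (r i / a i) ≤ K := fun i hi =>
    hK ▸ le_sup' (fun i => max (H 0 i) (r i / a i)) (mem_range.2 hi)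
  have hHK : ∀ t ≥ 0, ∀ i < n, H t i ≤ K := fun t ht i hi =>
    hs.H_le (fun j hj => (ha j hj).le) hM₀ h0 hi (ha i hi)
      ((h0 i hi).1.trans ((le_max_left _ _).trans (hKi i hi)))
      ((div_le_iff₀' (ha i hi)).1 ((le_max_right _ _).trans (hKi i hi)))
      ((le_max_left _ _).trans (hKi i hi)) t ht
  refine ⟨fun t ht => ?_, ?_⟩
  · have hF := hs.Ftot_le (fun j hj => (ha j hj).le) he hν h0 hW₀.ne' hWν
      (fun i hi => by linarith [hr i hi]) le_rfl hHK t ht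
    rwa [sub_zero, ← hQ] at hF
  · have hB : ∑ i ∈ range n, (1 + r i / W) * (r i / a i)
        = (∑ i ∈ range n, (W + r i) * (r i / a i + 0)) / W := by
      rw [sum_div]
      exact sum_congr rfl fun i _ => by field_simp; ring
    rw [hB]
    refine ge_of_tendsto (x := 𝓝[>] (0:ℝ)) ?_ (eventually_nhdsWithin_of_forall fun ε hε =>
      hs.limsup_Ftot_le ha hM₀ he hν h0 hW₀ hWν (fun i hi => (hr i hi).le) hε)
    exact ((Continuous.tendsto (by fun_prop) 0).mono_left nhdsWithin_le_nhds)
end BacteriaPhage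
end

section
/- For the nested infection network system, a positive equilibrium E* (all 2n components strictly positive) exists if and only if e_1 > e_2 > ... > e_n, r_1 > r_2 > ... > r_n, and Q_n < r_n, where Q_n = a_1/e_1 + Σ_{j=2}^n a_j(1/e_j − 1/e_{j−1}). In that case E* is given explicitly by H_1* = 1/e_1, H_j* = 1/e_j − 1/e_{j−1} for j > 1, P_j* = r_j − r_{j+1} for j < n, and P_n* = r_n − Q_n. -/
open Filter Finset

/-- `H*` components of the nested-infection-network positive equilibrium. -/
noncomputable def HstarNIN (e : ℕ → ℝ) : ℕ → ℝ
  | 0 => 1 / e 0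
  | (j + 1) => 1 / e (j + 1) - 1 / e j

/-- `Q_n = Σ_j a_j H_j*`. -/
noncomputable def QNIN (n : ℕ) (a e : ℕ → ℝ) : ℝ :=
  ∑ j ∈ Finset.range n, a j * HstarNIN e j

/-- `P*` components: `P_j* = r_j − r_{j+1}` for `j < n−1`, `P_{n-1}* = r_{n-1} − Q_n`
(0-based indexing). -/
noncomputable def PstarNIN (n : ℕ) (r a e : ℕ → ℝ) (j : ℕ) : ℝ :=
  if j = n - 1 then r j - QNIN n a e else r j - r (j + 1)

/-- `(h, p)` is an equilibrium of the NIN system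
`H_i' = H_i(r_i − Σ_j a_j H_j − Σ_{j ≥ i} P_j)`, `P_i' = e_i n_i P_i(Σ_{j ≤ i} H_j − 1/e_i)`. -/
def isEqNIN (n : ℕ) (r a e ν : ℕ → ℝ) (h p : ℕ → ℝ) : Prop :=
  (∀ i < n, h i * (r i - (∑ j ∈ Finset.range n, a j * h j) - ∑ j ∈ Finset.Ico i n, p j) = 0) ∧
  (∀ i < n, e i * ν i * p i * ((∑ j ∈ Finset.range (i + 1), h j) - 1 / e i) = 0)

/-!
At a positive equilibrium every `P_i` and `H_i` is nonzero, so the equilibrium equations become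
the triangular linear system `Σ_{j ≤ i} H_j = 1/e_i`, `Σ_{j ≥ i} P_j = r_i − Σ_j a_j H_j`.
Partial sums and tail sums determine a sequence, so this system has the single solution `E*`,
and the positivity of `E*` is exactly `e_1 > ⋯ > e_n`, `r_1 > ⋯ > r_n` and `Q_n < r_n`.
-/

theorem Finset.eq_of_forall_sum_range_succ_eq {M : Type*} [AddCommGroup M] {n : ℕ}
    {f g : ℕ → M} (hfg : ∀ i < n, ∑ j ∈ range (i + 1), f j = ∑ j ∈ range (i + 1), g j) :
    ∀ i < n, f i = g i := by
  rintro (_ | k) hk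
  · simpa using hfg 0 hk
  · have hsum := hfg (k + 1) hk
    rw [sum_range_succ, sum_range_succ g, hfg k (by omega)] at hsum
    exact add_left_cancel hsum

theorem Finset.eq_of_forall_sum_Ico_eq {M : Type*} [AddCommGroup M] {n : ℕ}
    {f g : ℕ → M} (hfg : ∀ i < n, ∑ j ∈ Ico i n, f j = ∑ j ∈ Ico i n, g j) :
    ∀ i < n, f i = g i := by
  intro i hi
  have hsum := hfg i hi
  rw [sum_eq_sum_Ico_succ_bot hi, sum_eq_sum_Ico_succ_bot hi] at hsum
  obtain hlt | rfl := (Nat.succ_le_of_lt hi).lt_or_eq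
  · rw [hfg (i + 1) hlt] at hsum
    exact add_right_cancel hsum
  · simpa using hsum

theorem sum_range_succ_HstarNIN (e : ℕ → ℝ) (i : ℕ) :
    ∑ j ∈ range (i + 1), HstarNIN e j = 1 / e i := by
  induction i with
  | zero => simp [HstarNIN]
  | succ k ih => rw [sum_range_succ, ih, HstarNIN]; ring

theorem sum_Ico_PstarNIN {n i : ℕ} (r a e : ℕ → ℝ) (hi : i < n) :
    ∑ j ∈ Ico i n, PstarNIN n r a e j = r i - QNIN n a e := by
  obtain ⟨m, rfl⟩ : ∃ m, n = m + 1 := ⟨n - 1, by omega⟩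
  have htelescope : ∑ j ∈ Ico i m, PstarNIN (m + 1) r a e j = r i - r m := by
    have hstep : ∀ j ∈ Ico i m, PstarNIN (m + 1) r a e j = r j - r (j + 1) := fun j hj =>
      if_neg (by rw [mem_Ico] at hj; omega)
    rw [sum_congr rfl hstep, ← neg_sub (r m), ← sum_Ico_sub (f := r) (by omega),
      ← sum_neg_distrib]
    simp only [neg_sub]
  rw [sum_Ico_succ_top (by omega), htelescope, PstarNIN, if_pos (by simp)]
  ring

theorem isEqNIN_iff {n : ℕ} {r a e ν h p : ℕ → ℝ} (he : ∀ i < n, 0 < e i)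
    (hν : ∀ i < n, 0 < ν i) (hpos : ∀ i < n, 0 < h i ∧ 0 < p i) :
    isEqNIN n r a e ν h p ↔
      (∀ i < n, ∑ j ∈ Ico i n, p j = r i - ∑ j ∈ range n, a j * h j) ∧
      ∀ i < n, ∑ j ∈ range (i + 1), h j = 1 / e i := by
  refine and_congr (forall₂_congr fun i hi => ?_) (forall₂_congr fun i hi => ?_)
  · rw [mul_eq_zero_iff_left (hpos i hi).1.ne']
    constructor <;> intro <;> linarith
  · have hcoef : e i * ν i * p i ≠ 0 := by
      have := (hpos i hi).2; have := he i hi; have := hν i hi; positivity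
    rw [mul_eq_zero_iff_left hcoef, sub_eq_zero]

theorem eq_star_of_isEqNIN {n : ℕ} {r a e ν h p : ℕ → ℝ} (he : ∀ i < n, 0 < e i)
    (hν : ∀ i < n, 0 < ν i) (hpos : ∀ i < n, 0 < h i ∧ 0 < p i)
    (heq : isEqNIN n r a e ν h p) :
    ∀ i < n, h i = HstarNIN e i ∧ p i = PstarNIN n r a e i := by
  obtain ⟨htail, hpartial⟩ := (isEqNIN_iff he hν hpos).1 heq
  have hH : ∀ i < n, h i = HstarNIN e i := eq_of_forall_sum_range_succ_eq fun i hi => by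
    rw [hpartial i hi, sum_range_succ_HstarNIN]
  have hQ : ∑ j ∈ range n, a j * h j = QNIN n a e :=
    sum_congr rfl fun j hj => by rw [hH j (mem_range.1 hj)]
  have hP : ∀ i < n, p i = PstarNIN n r a e i := eq_of_forall_sum_Ico_eq fun i hi => by
    rw [htail i hi, hQ, sum_Ico_PstarNIN r a e hi]
  exact fun i hi => ⟨hH i hi, hP i hi⟩

theorem forall_HstarNIN_pos_iff {n : ℕ} {e : ℕ → ℝ} (he : ∀ i < n, 0 < e i) :
    (∀ i < n, 0 < HstarNIN e i) ↔ ∀ i, i + 1 < n → e (i + 1) < e i := by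
  constructor
  · intro hH i hi
    have hpos := hH (i + 1) hi
    rw [HstarNIN, sub_pos] at hpos
    exact (one_div_lt_one_div (he i (by omega)) (he (i + 1) hi)).1 hpos
  · rintro hdec (_ | i) hi
    · exact one_div_pos.2 (he 0 hi)
    · rw [HstarNIN, sub_pos]
      exact one_div_lt_one_div_of_lt (he (i + 1) hi) (hdec i hi)

theorem forall_PstarNIN_pos_iff {n : ℕ} (hn : 0 < n) {r a e : ℕ → ℝ} :
    (∀ i < n, 0 < PstarNIN n r a e i) ↔
      (∀ i, i + 1 < n → r (i + 1) < r i) ∧ QNIN n a e < r (n - 1) := by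
  constructor
  · intro hP
    refine ⟨fun i hi => ?_, ?_⟩
    · have hpos := hP i (by omega)
      rwa [PstarNIN, if_neg (by omega), sub_pos] at hpos
    · have hpos := hP (n - 1) (by omega)
      rwa [PstarNIN, if_pos rfl, sub_pos] at hpos
  · rintro ⟨hdec, hQ⟩ i hi
    rw [PstarNIN]
    split_ifs with hlast
    · rw [hlast, sub_pos]; exact hQ
    · exact sub_pos.2 (hdec i (by omega))

theorem statement2_general
    (n : ℕ) (hn : 0 < n) (r a e ν : ℕ → ℝ)
    (he : ∀ i < n, 0 < e i) (hν : ∀ i < n, 0 < ν i) :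
    ((∃ h p : ℕ → ℝ, (∀ i < n, 0 < h i ∧ 0 < p i) ∧ isEqNIN n r a e ν h p) ↔
      ((∀ i, i + 1 < n → e (i + 1) < e i) ∧ (∀ i, i + 1 < n → r (i + 1) < r i) ∧
        QNIN n a e < r (n - 1))) ∧
    (∀ h p : ℕ → ℝ, (∀ i < n, 0 < h i ∧ 0 < p i) → isEqNIN n r a e ν h p →
      ∀ i < n, h i = HstarNIN e i ∧ p i = PstarNIN n r a e i) := by
  have hstar_pos : (∀ i < n, 0 < HstarNIN e i ∧ 0 < PstarNIN n r a e i) ↔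
      (∀ i, i + 1 < n → e (i + 1) < e i) ∧ (∀ i, i + 1 < n → r (i + 1) < r i) ∧
        QNIN n a e < r (n - 1) := by
    simp only [← forall_HstarNIN_pos_iff he, ← forall_PstarNIN_pos_iff hn (a := a), ← forall_and]
  refine ⟨⟨fun ⟨h, p, hpos, heq⟩ => hstar_pos.1 fun i hi => ?_, fun hcond => ?_⟩,
    fun h p hpos heq => eq_star_of_isEqNIN he hν hpos heq⟩
  · obtain ⟨hH, hP⟩ := eq_star_of_isEqNIN he hν hpos heq i hi
    exact hH ▸ hP ▸ hpos i hi
  · refine ⟨_, _, hstar_pos.2 hcond, (isEqNIN_iff he hν (hstar_pos.2 hcond)).2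
      ⟨fun i hi => sum_Ico_PstarNIN r a e hi, fun i _ => sum_range_succ_HstarNIN e i⟩⟩

/-- a positive equilibrium of the NIN system exists iff
`e_1 > ⋯ > e_n`, `r_1 > ⋯ > r_n` and `Q_n < r_n`; in that case it is given by the
explicit formulas `H* , P*`. -/
theorem statement2
    (n : ℕ) (hn : 0 < n) (r a e ν : ℕ → ℝ)
    (hr : ∀ i < n, 0 < r i) (ha : ∀ i < n, 0 < a i)
    (he : ∀ i < n, 0 < e i) (hν : ∀ i < n, 0 < ν i) :
    ((∃ h p : ℕ → ℝ, (∀ i < n, 0 < h i ∧ 0 < p i) ∧ isEqNIN n r a e ν h p) ↔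
      ((∀ i, i + 1 < n → e (i + 1) < e i) ∧ (∀ i, i + 1 < n → r (i + 1) < r i) ∧
        QNIN n a e < r (n - 1))) ∧
    (∀ h p : ℕ → ℝ, (∀ i < n, 0 < h i ∧ 0 < p i) → isEqNIN n r a e ν h p →
      ∀ i < n, h i = HstarNIN e i ∧ p i = PstarNIN n r a e i) :=
  statement2_general n hn r a e ν he hν
end

section
/- In the nested infection network system, if a bounded nonnegative solution satisfies limsup_{t→∞} Σ_{j ≤ i} H_j(t) < 1/e_i, then P_i(t) → 0 as t → ∞. -/
/-! Once `S = Σ_{j ≤ i} H_j` stays below some `b < 1/e_i`, the equation for `P_i` gives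
`P_i' ≤ -μ P_i` with `μ = e_i ν_i (1/e_i - b) > 0`, so by Grönwall's inequality the
nonnegative `P_i` decays at least like `exp(-μ t)`. -/

open Filter Finset

/-- `(H, P)` solves the NIN system
`H_i' = H_i(r_i − Σ_j a_j H_j − Σ_{j ≥ i} P_j)`, `P_i' = e_i n_i P_i(Σ_{j ≤ i} H_j − 1/e_i)`
for `t ≥ 0`. -/
def isSolNIN (n : ℕ) (r a e ν : ℕ → ℝ) (H P : ℝ → ℕ → ℝ) : Prop :=
  ∀ t ≥ (0:ℝ), ∀ i < n,
    HasDerivAt (fun s => H s i)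
      (H t i * (r i - (∑ j ∈ Finset.range n, a j * H t j) - ∑ j ∈ Finset.Ico i n, P t j)) t ∧
    HasDerivAt (fun s => P s i)
      (e i * ν i * P t i * ((∑ j ∈ Finset.range (i + 1), H t j) - 1 / e i)) t

open Set Real Topology

theorem le_mul_exp_of_hasDerivAt_le_mul {f f' : ℝ → ℝ} {K T : ℝ}
    (hf : ∀ t ≥ T, HasDerivAt f (f' t) t) (hle : ∀ t ≥ T, f' t ≤ K * f t) :
    ∀ t ≥ T, f t ≤ f T * exp (K * (t - T)) := by
  intro t ht
  have hcont : ContinuousOn f (Icc T t) := fun s hs => (hf s hs.1).continuousAt.continuousWithinAt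
  have hgron := le_gronwallBound_of_liminf_deriv_right_le (ε := 0) hcont
    (fun s hs _ hr => (hf s hs.1).hasDerivWithinAt.liminf_right_slope_le hr) le_rfl
    (fun s hs => by simpa using hle s hs.1) t ⟨ht, le_rfl⟩
  rwa [gronwallBound_ε0] at hgron

theorem tendsto_zero_of_hasDerivAt_le_neg_mul {f f' : ℝ → ℝ} {μ : ℝ} (hμ : 0 < μ)
    (hf : ∀ᶠ t in atTop, HasDerivAt f (f' t) t ∧ f' t ≤ -μ * f t)
    (hf_nonneg : ∀ᶠ t in atTop, 0 ≤ f t) :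
    Tendsto f atTop (𝓝 0) := by
  obtain ⟨T, hT⟩ := eventually_atTop.mp hf
  have hdecay : Tendsto (fun t => f T * exp (-μ * (t - T))) atTop (𝓝 0) := by
    have hlin : Tendsto (fun t => -μ * (t - T)) atTop atBot :=
      (tendsto_atTop_add_const_right atTop (-T) tendsto_id).const_mul_atTop_of_neg
        (neg_lt_zero.mpr hμ)
    simpa using (tendsto_exp_atBot.comp hlin).const_mul (f T)
  refine tendsto_of_tendsto_of_tendsto_of_le_of_le' tendsto_const_nhds hdecay hf_nonneg ?_
  filter_upwards [eventually_ge_atTop T] with t ht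
  exact le_mul_exp_of_hasDerivAt_le_mul (fun s hs => (hT s hs).1) (fun s hs => (hT s hs).2) t ht

theorem statement4_general
    (n : ℕ) (r a e ν : ℕ → ℝ)
    (he : ∀ i < n, 0 < e i) (hν : ∀ i < n, 0 < ν i)
    (H P : ℝ → ℕ → ℝ) (hsol : isSolNIN n r a e ν H P)
    (hpos : ∀ t ≥ (0:ℝ), ∀ j < n, 0 ≤ H t j ∧ 0 ≤ P t j)
    (hbdd : ∃ B : ℝ, ∀ t ≥ (0:ℝ), ∀ j < n, H t j ≤ B ∧ P t j ≤ B)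
    (i : ℕ) (hi : i < n)
    (hls : Filter.limsup (fun t => ∑ j ∈ Finset.range (i + 1), H t j) Filter.atTop < 1 / e i) :
    Filter.Tendsto (fun t => P t i) Filter.atTop (nhds 0) := by
  obtain ⟨b, hls_b, hb⟩ := exists_between hls
  obtain ⟨B, hB⟩ := hbdd
  -- `limsup` of a function unbounded above is a junk value, hence the bound on `H`.
  have hS_bdd : IsBoundedUnder (· ≤ ·) atTop (fun t => ∑ j ∈ range (i + 1), H t j) := by
    refine isBoundedUnder_of_eventually_le (a := (i + 1) • B) ?_
    filter_upwards [eventually_ge_atTop 0] with t ht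
    simpa using sum_le_card_nsmul _ _ B fun j hj => (hB t ht j ((mem_range.mp hj).trans_le hi)).1
  have hS_lt := eventually_lt_of_limsup_lt hls_b hS_bdd
  have hrate : 0 < e i * ν i * (1 / e i - b) :=
    mul_pos (mul_pos (he i hi) (hν i hi)) (sub_pos.mpr hb)
  refine tendsto_zero_of_hasDerivAt_le_neg_mul hrate
    (f' := fun t => e i * ν i * P t i * ((∑ j ∈ range (i + 1), H t j) - 1 / e i)) ?_ ?_
  · filter_upwards [hS_lt, eventually_ge_atTop 0] with t hSt ht
    refine ⟨(hsol t ht i hi).2, ?_⟩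
    have hcP : 0 ≤ e i * ν i * P t i :=
      mul_nonneg (mul_pos (he i hi) (hν i hi)).le (hpos t ht i hi).2
    calc e i * ν i * P t i * ((∑ j ∈ range (i + 1), H t j) - 1 / e i)
        ≤ e i * ν i * P t i * (b - 1 / e i) := by gcongr
      _ = -(e i * ν i * (1 / e i - b)) * P t i := by ring
  · filter_upwards [eventually_ge_atTop 0] with t ht using (hpos t ht i hi).2

/-- in the NIN system, if a bounded nonnegative solution satisfies
`limsup_{t→∞} Σ_{j ≤ i} H_j(t) < 1/e_i`, then `P_i(t) → 0`. -/
theorem statement4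
    (n : ℕ) (r a e ν : ℕ → ℝ)
    (hr : ∀ i < n, 0 < r i) (ha : ∀ i < n, 0 < a i)
    (he : ∀ i < n, 0 < e i) (hν : ∀ i < n, 0 < ν i)
    (H P : ℝ → ℕ → ℝ) (hsol : isSolNIN n r a e ν H P)
    (hpos : ∀ t ≥ (0:ℝ), ∀ j < n, 0 ≤ H t j ∧ 0 ≤ P t j)
    (hbdd : ∃ B : ℝ, ∀ t ≥ (0:ℝ), ∀ j < n, H t j ≤ B ∧ P t j ≤ B)
    (i : ℕ) (hi : i < n)
    (hls : Filter.limsup (fun t => ∑ j ∈ Finset.range (i + 1), H t j) Filter.atTop < 1 / e i) :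
    Filter.Tendsto (fun t => P t i) Filter.atTop (nhds 0) :=
  statement4_general n r a e ν he hν H P hsol hpos hbdd i hi hls
end

section
/- In the nested infection network system, if i < j, H_i(0) > 0, and limsup_{t→∞} (P_i(t) + P_{i+1}(t) + ... + P_{j−1}(t)) < r_i − r_j, then H_j(t) → 0 as t → ∞. -/
open Filter Finset

/-!
`H_i` never vanishes: it solves the linear equation `H_i' = H_i c_i`, where the rate
`c_i = ninRate n r a H P i` is bounded, so by backward uniqueness it cannot reach `0` from `H_i(0) > 0`. The ratio `Q = H_j / H_i` then
satisfies `Q' = Q ((r_j - r_i) + P_i + ⋯ + P_{j-1})`, and by the limsup hypothesis this rate is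
eventually below a negative constant. Grönwall's inequality makes `Q` decay exponentially, and
`H_j = Q H_i` with `H_i` bounded.
-/

open Set in
theorem eqOn_zero_of_hasDerivAt_mul_of_eq_zero_right {u c : ℝ → ℝ} {K a b : ℝ}
    (hu : ∀ t ∈ Icc a b, HasDerivAt u (u t * c t) t) (hc : ∀ t ∈ Icc a b, |c t| ≤ K)
    (hb : u b = 0) : EqOn u 0 (Icc a b) := by
  have hlip : ∀ t ∈ Ioc a b, LipschitzOnWith K.toNNReal (fun x : ℝ => x * c t) univ := by
    intro t ht
    refine (LipschitzWith.weaken (K := ‖c t‖₊) ?_ ?_).lipschitzOnWith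
    · simpa only [smul_eq_mul, mul_comm] using lipschitzWith_smul (β := ℝ) (c t)
    · rw [← NNReal.coe_le_coe, coe_nnnorm, Real.coe_toNNReal']
      exact le_max_of_le_left (hc t (Ioc_subset_Icc_self ht))
  exact ODE_solution_unique_of_mem_Icc_left hlip
    (fun t ht => (hu t ht).continuousAt.continuousWithinAt)
    (fun t ht => (hu t (Ioc_subset_Icc_self ht)).hasDerivWithinAt) (fun _ _ => mem_univ _)
    continuousOn_const
    (fun t _ => by simpa [Pi.zero_def] using hasDerivWithinAt_const t (Iic t) (0 : ℝ))
    (fun _ _ => mem_univ _) hb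

open Set in
theorem pos_of_hasDerivAt_mul {u c : ℝ → ℝ} {K a b : ℝ}
    (hu : ∀ t ∈ Icc a b, HasDerivAt u (u t * c t) t) (hc : ∀ t ∈ Icc a b, |c t| ≤ K)
    (hab : a ≤ b) (ha : 0 < u a) (hb : 0 ≤ u b) : 0 < u b := by
  refine hb.lt_of_ne fun hb0 => ha.ne' ?_
  exact eqOn_zero_of_hasDerivAt_mul_of_eq_zero_right hu hc hb0.symm (left_mem_Icc.2 hab)

theorem le_mul_exp_of_hasDerivAt_le {f f' : ℝ → ℝ} {K T : ℝ}
    (hf : ∀ t ≥ T, HasDerivAt f (f' t) t) (hf' : ∀ t ≥ T, f' t ≤ K * f t) :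
    ∀ t ≥ T, f t ≤ f T * Real.exp (K * (t - T)) := by
  intro t ht
  have := le_gronwallBound_of_liminf_deriv_right_le (b := t) (δ := f T) (ε := 0)
    (fun s hs => (hf s hs.1).continuousAt.continuousWithinAt)
    (fun s hs _ hr => (hf s hs.1).hasDerivWithinAt.liminf_right_slope_le hr) le_rfl
    (fun s hs => by simpa using hf' s hs.1) t ⟨ht, le_rfl⟩
  rwa [gronwallBound_ε0] at this

theorem hasDerivAt_div_of_hasDerivAt_mul {u v : ℝ → ℝ} {c d t : ℝ}
    (hu : HasDerivAt u (u t * c) t) (hv : HasDerivAt v (v t * d) t) (hv0 : v t ≠ 0) :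
    HasDerivAt (fun s => u s / v s) (u t / v t * (c - d)) t := by
  refine (hu.div hv hv0).congr_deriv ?_
  field_simp

theorem tendsto_zero_of_hasDerivAt_le_neg_mul_s6 {f f' : ℝ → ℝ} {K T : ℝ} (hK : K < 0)
    (hf : ∀ t ≥ T, HasDerivAt f (f' t) t) (hf' : ∀ t ≥ T, f' t ≤ K * f t)
    (hf0 : ∀ t ≥ T, 0 ≤ f t) : Tendsto f atTop (nhds 0) := by
  have hexp : Tendsto (fun t => f T * Real.exp (K * (t - T))) atTop (nhds 0) := by
    simpa [sub_eq_add_neg] using ((Real.tendsto_exp_atBot.comp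
      ((tendsto_atTop_add_const_right _ (-T) tendsto_id).const_mul_atTop_of_neg hK)).const_mul
      (f T))
  refine squeeze_zero' (eventually_atTop.2 ⟨T, hf0⟩) (eventually_atTop.2 ⟨T, ?_⟩) hexp
  exact le_mul_exp_of_hasDerivAt_le hf hf'

section NIN

def ninRate (n : ℕ) (r a : ℕ → ℝ) (H P : ℝ → ℕ → ℝ) (k : ℕ) (t : ℝ) : ℝ :=
  r k - (∑ m ∈ range n, a m * H t m) - ∑ m ∈ Ico k n, P t m

variable {n : ℕ} {r a : ℕ → ℝ} {H P : ℝ → ℕ → ℝ}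

theorem ninRate_sub_ninRate {i j : ℕ} (t : ℝ) (hij : i ≤ j) (hjn : j ≤ n) :
    ninRate n r a H P j t - ninRate n r a H P i t = (r j - r i) + ∑ k ∈ Ico i j, P t k := by
  rw [ninRate, ninRate, ← sum_Ico_consecutive _ hij hjn]
  ring

theorem abs_ninRate_le {B t : ℝ} (k : ℕ) (hH : ∀ m < n, |H t m| ≤ B)
    (hP : ∀ m < n, |P t m| ≤ B) :
    |ninRate n r a H P k t| ≤ |r k| + ∑ m ∈ range n, |a m| * B + ∑ _m ∈ Ico k n, B := by
  have hHsum : |∑ m ∈ range n, a m * H t m| ≤ ∑ m ∈ range n, |a m| * B :=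
    (abs_sum_le_sum_abs _ _).trans <| sum_le_sum fun m hm => by
      rw [abs_mul]
      exact mul_le_mul_of_nonneg_left (hH m (mem_range.1 hm)) (abs_nonneg _)
  have hPsum : |∑ m ∈ Ico k n, P t m| ≤ ∑ _m ∈ Ico k n, B :=
    (abs_sum_le_sum_abs _ _).trans <| sum_le_sum fun m hm => hP m (mem_Ico.1 hm).2
  calc |ninRate n r a H P k t|
      ≤ |r k| + |∑ m ∈ range n, a m * H t m| + |∑ m ∈ Ico k n, P t m| :=
        (abs_sub _ _).trans (add_le_add_left (abs_sub _ _) _)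
    _ ≤ _ := by gcongr

variable {e ν : ℕ → ℝ} {B : ℝ}

theorem isSolNIN.hasDerivAt_H (hsol : isSolNIN n r a e ν H P) {k : ℕ} {t : ℝ} (hk : k < n)
    (ht : 0 ≤ t) : HasDerivAt (fun s => H s k) (H t k * ninRate n r a H P k t) t :=
  (hsol t ht k hk).1

theorem exists_abs_ninRate_le (hpos : ∀ t ≥ (0:ℝ), ∀ k < n, 0 ≤ H t k ∧ 0 ≤ P t k)
    (hB : ∀ t ≥ (0:ℝ), ∀ k < n, H t k ≤ B ∧ P t k ≤ B) (k : ℕ) :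
    ∃ K, ∀ t ≥ (0:ℝ), |ninRate n r a H P k t| ≤ K := by
  refine ⟨_, fun t ht => abs_ninRate_le k (B := B) (fun m hm => ?_) (fun m hm => ?_)⟩
  · exact abs_le.2 ⟨by linarith [(hpos t ht m hm).1, (hB t ht m hm).1], (hB t ht m hm).1⟩
  · exact abs_le.2 ⟨by linarith [(hpos t ht m hm).2, (hB t ht m hm).2], (hB t ht m hm).2⟩

theorem isSolNIN.H_pos (hsol : isSolNIN n r a e ν H P)
    (hpos : ∀ t ≥ (0:ℝ), ∀ k < n, 0 ≤ H t k ∧ 0 ≤ P t k)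
    (hB : ∀ t ≥ (0:ℝ), ∀ k < n, H t k ≤ B ∧ P t k ≤ B) {k : ℕ} {t : ℝ} (hk : k < n)
    (h0 : 0 < H 0 k) (ht : 0 ≤ t) : 0 < H t k := by
  obtain ⟨K, hK⟩ := exists_abs_ninRate_le hpos hB k
  exact pos_of_hasDerivAt_mul (fun s hs => hsol.hasDerivAt_H hk hs.1) (fun s hs => hK s hs.1) ht
    h0 (hpos t ht k hk).1

theorem isSolNIN.tendsto_H_div_H (hsol : isSolNIN n r a e ν H P)
    (hpos : ∀ t ≥ (0:ℝ), ∀ k < n, 0 ≤ H t k ∧ 0 ≤ P t k) {i j : ℕ} (hij : i ≤ j) (hj : j < n)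
    (hHi : ∀ t ≥ (0:ℝ), 0 < H t i) {c T : ℝ} (hc : c < r i - r j)
    (hT : ∀ t ≥ T, 0 ≤ t ∧ ∑ k ∈ Ico i j, P t k < c) :
    Tendsto (fun t => H t j / H t i) atTop (nhds 0) := by
  have hQ_nonneg : ∀ t ≥ T, 0 ≤ H t j / H t i := fun t ht =>
    div_nonneg (hpos t (hT t ht).1 j hj).1 (hHi t (hT t ht).1).le
  refine tendsto_zero_of_hasDerivAt_le_neg_mul_s6 (K := c - (r i - r j)) (by linarith)
    (fun t ht => hasDerivAt_div_of_hasDerivAt_mul (hsol.hasDerivAt_H hj (hT t ht).1)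
      (hsol.hasDerivAt_H (hij.trans_lt hj) (hT t ht).1) (hHi t (hT t ht).1).ne')
    (fun t ht => ?_) hQ_nonneg
  rw [ninRate_sub_ninRate t hij hj.le, mul_comm]
  exact mul_le_mul_of_nonneg_right (by linarith [(hT t ht).2]) (hQ_nonneg t ht)

end NIN

theorem statement6_general
    (n : ℕ) (r a e ν : ℕ → ℝ)
    (H P : ℝ → ℕ → ℝ) (hsol : isSolNIN n r a e ν H P)
    (hpos : ∀ t ≥ (0:ℝ), ∀ k < n, 0 ≤ H t k ∧ 0 ≤ P t k)
    (hbdd : ∃ B : ℝ, ∀ t ≥ (0:ℝ), ∀ k < n, H t k ≤ B ∧ P t k ≤ B)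
    (i j : ℕ) (hij : i < j) (hj : j < n)
    (hHi0 : 0 < H 0 i)
    (hls : Filter.limsup (fun t => ∑ k ∈ Finset.Ico i j, P t k) Filter.atTop < r i - r j) :
    Filter.Tendsto (fun t => H t j) Filter.atTop (nhds 0) := by
  obtain ⟨B, hB⟩ := hbdd
  have hi : i < n := hij.trans hj
  have hHi : ∀ t ≥ (0:ℝ), 0 < H t i := fun t => hsol.H_pos hpos hB hi hHi0
  have hPsum_bdd : IsBoundedUnder (· ≤ ·) atTop (fun t => ∑ k ∈ Ico i j, P t k) :=
    isBoundedUnder_of_eventually_le (a := ∑ _k ∈ Ico i j, B) <| eventually_atTop.2 ⟨0,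
      fun t ht => sum_le_sum fun k hk => (hB t ht k ((mem_Ico.1 hk).2.trans hj)).2⟩
  obtain ⟨c, hlsc, hc⟩ := exists_between hls
  obtain ⟨T, hT⟩ := eventually_atTop.1
    ((eventually_ge_atTop 0).and (eventually_lt_of_limsup_lt hlsc hPsum_bdd))
  have hQ := hsol.tendsto_H_div_H hpos hij.le hj hHi hc hT
  refine squeeze_zero' (eventually_atTop.2 ⟨0, fun t ht => (hpos t ht j hj).1⟩)
    (eventually_atTop.2 ⟨0, fun t ht => ?_⟩) (by simpa using hQ.mul_const B)
  calc H t j = H t j / H t i * H t i := (div_mul_cancel₀ _ (hHi t ht).ne').symm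
    _ ≤ H t j / H t i * B :=
      mul_le_mul_of_nonneg_left (hB t ht i hi).1 (div_nonneg (hpos t ht j hj).1 (hHi t ht).le)

/-- in the NIN system, if `i < j`, `H_i(0) > 0` and
`limsup_{t→∞} (P_i + P_{i+1} + ⋯ + P_{j−1})(t) < r_i − r_j`, then `H_j(t) → 0`. -/
theorem statement6
    (n : ℕ) (r a e ν : ℕ → ℝ)
    (hr : ∀ i < n, 0 < r i) (ha : ∀ i < n, 0 < a i)
    (he : ∀ i < n, 0 < e i) (hν : ∀ i < n, 0 < ν i)
    (hrord : ∀ i, i + 1 < n → r (i + 1) < r i)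
    (H P : ℝ → ℕ → ℝ) (hsol : isSolNIN n r a e ν H P)
    (hpos : ∀ t ≥ (0:ℝ), ∀ k < n, 0 ≤ H t k ∧ 0 ≤ P t k)
    (hbdd : ∃ B : ℝ, ∀ t ≥ (0:ℝ), ∀ k < n, H t k ≤ B ∧ P t k ≤ B)
    (i j : ℕ) (hij : i < j) (hj : j < n)
    (hHi0 : 0 < H 0 i)
    (hls : Filter.limsup (fun t => ∑ k ∈ Finset.Ico i j, P t k) Filter.atTop < r i - r j) :
    Filter.Tendsto (fun t => H t j) Filter.atTop (nhds 0) :=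
  statement6_general n r a e ν H P hsol hpos hbdd i j hij hj hHi0 hls
end

section
/- In the nested infection network system with all virus identically zero (P_i ≡ 0 for all i) and H_1(0) > 0, the first host converges: H_1(t) → r_1/a_1, and H_j(t) → 0 for j ≥ 2. -/
open Filter Finset Real Topology

/-!
Write `S = ∑ⱼ aⱼ Hⱼ` and let `J` be a primitive of `S` with `J 0 = 0`. Each equation
`Hᵢ' = Hᵢ (rᵢ - S)` integrates to `Hᵢ(t) e^{J(t)} = Hᵢ(0) e^{rᵢ t}`, so
`(e^J)' = e^J S = ∑ⱼ aⱼ Hⱼ(0) e^{rⱼ t}` no longer involves the unknowns and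
`e^{J(t)} = 1 + ∑ⱼ aⱼ Hⱼ(0) (e^{rⱼ t} - 1) / rⱼ`. Thus `Hᵢ(t) = Hᵢ(0) e^{(rᵢ - r₀) t} / D(t)` with
`D(t) = e^{-r₀ t} e^{J(t)}`, and since `r₀` is the largest rate, `D(t) → a₀ H₀(0) / r₀ > 0`.
-/

lemma eq_of_hasDerivAt_eq_of_ge {f g f' : ℝ → ℝ} {a : ℝ}
    (hf : ∀ t ≥ a, HasDerivAt f (f' t) t) (hg : ∀ t ≥ a, HasDerivAt g (f' t) t)
    (ha : f a = g a) : ∀ t ≥ a, f t = g t := fun t ht =>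
  eq_of_has_deriv_right_eq (fun s hs => (hf s hs.1).hasDerivWithinAt)
    (fun s hs => (hg s hs.1).hasDerivWithinAt)
    (fun s hs => (hf s hs.1).continuousAt.continuousWithinAt)
    (fun s hs => (hg s hs.1).continuousAt.continuousWithinAt) ha t ⟨ht, le_rfl⟩

lemma exists_hasDerivAt_of_continuousAt_of_ge {c : ℝ → ℝ} {a : ℝ}
    (hc : ∀ t ≥ a, ContinuousAt c t) :
    ∃ F : ℝ → ℝ, F a = 0 ∧ ∀ t ≥ a, HasDerivAt F (c t) t := by
  have hcont : Continuous fun s => c (max s a) := continuous_iff_continuousAt.2 fun s =>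
    (hc _ (le_max_right s a)).comp (f := fun s => max s a) (by fun_prop)
  refine ⟨fun t => ∫ s in a..t, c (max s a), intervalIntegral.integral_same, fun t ht => ?_⟩
  simpa [max_eq_left ht] using (hcont.integral_hasStrictDerivAt a t).hasDerivAt

lemma mul_exp_neg_eq_of_hasDerivAt_mul {f c F : ℝ → ℝ} {a : ℝ}
    (hF : ∀ t ≥ a, HasDerivAt F (c t) t) (hf : ∀ t ≥ a, HasDerivAt f (f t * c t) t) :
    ∀ t ≥ a, f t * exp (-F t) = f a * exp (-F a) :=
  eq_of_hasDerivAt_eq_of_ge (f' := fun _ => 0)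
    (fun t ht => ((hf t ht).mul (hF t ht).neg.exp).congr_deriv (by ring))
    (fun t _ => hasDerivAt_const t _) rfl

lemma tendsto_exp_mul_atTop_nhds_zero {k : ℝ} (hk : k < 0) :
    Tendsto (fun t => exp (k * t)) atTop (𝓝 0) :=
  tendsto_exp_atBot.comp (tendsto_id.const_mul_atTop_of_neg hk)

lemma tendsto_exp_neg_mul_mul_exp_sub_one {ρ k : ℝ} (hρ : 0 < ρ) (hk : k ≤ ρ) :
    Tendsto (fun t => exp (-(ρ * t)) * (exp (k * t) - 1)) atTop
      (𝓝 (if k = ρ then 1 else 0)) := by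
  have hdecay : Tendsto (fun t => exp (-(ρ * t))) atTop (𝓝 0) := by
    simpa only [neg_mul] using tendsto_exp_mul_atTop_nhds_zero (neg_neg_of_pos hρ)
  have hk' : Tendsto (fun t => exp ((k - ρ) * t)) atTop (𝓝 (if k = ρ then 1 else 0)) := by
    split_ifs with h
    · simp [h]
    · exact tendsto_exp_mul_atTop_nhds_zero (by linarith [lt_of_le_of_ne hk h])
  convert hk'.sub hdecay using 1
  · ext t
    rw [mul_sub, mul_one, ← exp_add]
    ring_nf
  · simp

/-- The closed form of `exp (∫₀ᵗ ∑ⱼ aⱼ Hⱼ)`, with `b j = a j * H 0 j`. -/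
noncomputable def lotkaVolterraDenom (n : ℕ) (r b : ℕ → ℝ) (t : ℝ) : ℝ :=
  1 + ∑ j ∈ range n, b j * (exp (r j * t) - 1) / r j

lemma hasDerivAt_lotkaVolterraDenom {n : ℕ} {r : ℕ → ℝ} (hr : ∀ i < n, r i ≠ 0) (b : ℕ → ℝ)
    (t : ℝ) :
    HasDerivAt (lotkaVolterraDenom n r b) (∑ j ∈ range n, b j * exp (r j * t)) t := by
  have hterm : ∀ j ∈ range n, HasDerivAt (fun s => b j * (exp (r j * s) - 1) / r j)
      (b j * exp (r j * t)) t := fun j hj => by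
    refine ((((hasDerivAt_id t).const_mul (r j)).exp.sub_const 1).const_mul (b j)).div_const
      (r j) |>.congr_deriv ?_
    field_simp [hr j (mem_range.1 hj)]
    simp
  exact ((HasDerivAt.sum hterm).const_add 1).congr_of_eventuallyEq
    (.of_forall fun s => by simp [lotkaVolterraDenom])

lemma tendsto_exp_neg_mul_lotkaVolterraDenom {n : ℕ} {r : ℕ → ℝ} (hn : 0 < n) (hr0 : 0 < r 0)
    (hlt : ∀ j, 0 < j → j < n → r j < r 0) (b : ℕ → ℝ) :
    Tendsto (fun t => exp (-(r 0 * t)) * lotkaVolterraDenom n r b t) atTop (𝓝 (b 0 / r 0)) := by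
  have hdecay : Tendsto (fun t => exp (-(r 0 * t))) atTop (𝓝 0) := by
    simpa only [neg_mul] using tendsto_exp_mul_atTop_nhds_zero (neg_neg_of_pos hr0)
  have hsum : Tendsto
      (fun t => ∑ j ∈ range n, b j * (exp (-(r 0 * t)) * (exp (r j * t) - 1)) / r j) atTop
      (𝓝 (∑ j ∈ range n, if j = 0 then b 0 / r 0 else 0)) := by
    refine tendsto_finsetSum _ fun j hj => ?_
    rcases Nat.eq_zero_or_pos j with rfl | hj0
    · simpa using
        ((tendsto_exp_neg_mul_mul_exp_sub_one hr0 le_rfl).const_mul (b 0)).div_const (r 0)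
    · have hrj := hlt j hj0 (mem_range.1 hj)
      simpa [hj0.ne', hrj.ne] using
        ((tendsto_exp_neg_mul_mul_exp_sub_one hr0 hrj.le).const_mul (b j)).div_const (r j)
  rw [sum_ite_eq' (range n) 0, if_pos (mem_range.2 hn)] at hsum
  convert hdecay.add hsum using 1
  · ext t
    rw [lotkaVolterraDenom, mul_add, mul_one, mul_sum]
    congr 1
    refine sum_congr rfl fun j _ => by ring
  · simp

def IsLotkaVolterraSolution (n : ℕ) (r a : ℕ → ℝ) (H : ℝ → ℕ → ℝ) : Prop :=
  ∀ t ≥ (0:ℝ), ∀ i < n, HasDerivAt (fun s => H s i)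
    (H t i * (r i - ∑ j ∈ range n, a j * H t j)) t

namespace IsLotkaVolterraSolution

variable {n : ℕ} {r a : ℕ → ℝ} {H : ℝ → ℕ → ℝ}

lemma mul_exp_eq (hH : IsLotkaVolterraSolution n r a H) {J : ℝ → ℝ} (hJ0 : J 0 = 0)
    (hJ : ∀ t ≥ (0:ℝ), HasDerivAt J (∑ j ∈ range n, a j * H t j) t)
    {i : ℕ} (hi : i < n) {t : ℝ} (ht : 0 ≤ t) :
    H t i * exp (J t) = H 0 i * exp (r i * t) := by
  have hF : ∀ s ≥ (0:ℝ), HasDerivAt (fun s => r i * s - J s)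
      (r i - ∑ j ∈ range n, a j * H s j) s := fun s hs =>
    (((hasDerivAt_id s).const_mul (r i)).sub (hJ s hs)).congr_deriv (by simp)
  have h := mul_exp_neg_eq_of_hasDerivAt_mul hF (fun s hs => hH s hs i hi) t ht
  simp only [mul_zero, hJ0, sub_zero, neg_zero, exp_zero, mul_one, neg_sub] at h
  rw [← h, mul_assoc, ← exp_add, sub_add_cancel]

lemma eq_mul_exp_div_lotkaVolterraDenom (hH : IsLotkaVolterraSolution n r a H)
    (hr : ∀ i < n, r i ≠ 0) {i : ℕ} (hi : i < n) {t : ℝ} (ht : 0 ≤ t) :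
    H t i = H 0 i * exp (r i * t) / lotkaVolterraDenom n r (fun j => a j * H 0 j) t := by
  obtain ⟨J, hJ0, hJ⟩ := exists_hasDerivAt_of_continuousAt_of_ge (a := 0)
    (c := fun t => ∑ j ∈ range n, a j * H t j) fun t ht =>
      tendsto_finsetSum _ fun j hj =>
        continuousAt_const.mul (hH t ht j (mem_range.1 hj)).continuousAt
  have hexpJ : ∀ t ≥ (0:ℝ), exp (J t) = lotkaVolterraDenom n r (fun j => a j * H 0 j) t := by
    refine eq_of_hasDerivAt_eq_of_ge (fun s hs => (hJ s hs).exp.congr_deriv ?_)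
      (fun s _ => hasDerivAt_lotkaVolterraDenom hr _ s) (by simp [hJ0, lotkaVolterraDenom])
    rw [mul_sum]
    refine sum_congr rfl fun j hj => ?_
    linear_combination a j * hH.mul_exp_eq hJ0 hJ (mem_range.1 hj) hs
  rw [← hexpJ t ht, eq_div_iff (exp_pos _).ne', hH.mul_exp_eq hJ0 hJ hi ht]

end IsLotkaVolterraSolution

theorem statement7_general
    (n : ℕ) (hn : 0 < n) (r a : ℕ → ℝ)
    (hr : ∀ i < n, 0 < r i) (ha : ∀ i < n, 0 < a i)
    (hrord : ∀ i, i + 1 < n → r (i + 1) < r i)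
    (H : ℝ → ℕ → ℝ)
    (hH : ∀ t ≥ (0:ℝ), ∀ i < n, HasDerivAt (fun s => H s i)
      (H t i * (r i - ∑ j ∈ Finset.range n, a j * H t j)) t)
    (hH10 : 0 < H 0 0) :
    Filter.Tendsto (fun t => H t 0) Filter.atTop (nhds (r 0 / a 0)) ∧
    (∀ j, 1 ≤ j → j < n → Filter.Tendsto (fun t => H t j) Filter.atTop (nhds 0)) := by
  have hlt : ∀ j, 0 < j → j < n → r j < r 0 := fun j hj hjn =>
    strictAntiOn_Iic_of_succ_lt (n := n - 1) (fun m hm => hrord m (by omega))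
      (by simp) (by simp; omega) hj
  set D := fun t => exp (-(r 0 * t)) * lotkaVolterraDenom n r (fun j => a j * H 0 j) t
  have hD : Tendsto D atTop (𝓝 (a 0 * H 0 0 / r 0)) :=
    tendsto_exp_neg_mul_lotkaVolterraDenom hn (hr 0 hn) hlt _
  have hDne : a 0 * H 0 0 / r 0 ≠ 0 := by have := ha 0 hn; have := hr 0 hn; positivity
  have hrep : ∀ i < n, ∀ᶠ t in atTop, H 0 i * exp ((r i - r 0) * t) * (D t)⁻¹ = H t i := by
    intro i hi
    filter_upwards [eventually_ge_atTop 0] with t ht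
    rw [IsLotkaVolterraSolution.eq_mul_exp_div_lotkaVolterraDenom hH (fun i hi => (hr i hi).ne')
      hi ht, sub_mul, exp_sub]
    simp only [D, exp_neg]
    field_simp
  refine ⟨?_, fun j hj hjn => ?_⟩
  · have hlim : Tendsto (fun t => H 0 0 * exp ((r 0 - r 0) * t) * (D t)⁻¹) atTop
        (𝓝 (H 0 0 * (a 0 * H 0 0 / r 0)⁻¹)) := by
      simpa only [sub_self, zero_mul, exp_zero, mul_one] using
        tendsto_const_nhds.mul (hD.inv₀ hDne)
    refine (hlim.congr' (hrep 0 hn)).trans_eq ?_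
    field_simp
  · have hdecay := tendsto_exp_mul_atTop_nhds_zero (sub_neg.2 (hlt j hj hjn))
    simpa using ((hdecay.const_mul (H 0 j)).mul (hD.inv₀ hDne)).congr' (hrep j hjn)

/-- with all virus identically zero the NIN system reduces to the
Lotka–Volterra competition system `H_i' = H_i(r_i − Σ_j a_j H_j)`; if `H_1(0) > 0` then
`H_1(t) → r_1/a_1` and `H_j(t) → 0` for `j ≥ 2`. -/
theorem statement7
    (n : ℕ) (hn : 0 < n) (r a : ℕ → ℝ)
    (hr : ∀ i < n, 0 < r i) (ha : ∀ i < n, 0 < a i)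
    (hrord : ∀ i, i + 1 < n → r (i + 1) < r i)
    (H : ℝ → ℕ → ℝ)
    (hH : ∀ t ≥ (0:ℝ), ∀ i < n, HasDerivAt (fun s => H s i)
      (H t i * (r i - ∑ j ∈ Finset.range n, a j * H t j)) t)
    (h0 : ∀ i < n, 0 ≤ H 0 i)
    (hH10 : 0 < H 0 0) :
    Filter.Tendsto (fun t => H t 0) Filter.atTop (nhds (r 0 / a 0)) ∧
    (∀ j, 1 ≤ j → j < n → Filter.Tendsto (fun t => H t j) Filter.atTop (nhds 0)) :=
  statement7_general n hn r a hr ha hrord H hH hH10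
end

section
/- Time-average lemma for perturbed Lotka-Volterra systems: let x(t) be a bounded positive solution of x_i' = x_i(r_i + Σ_j a_{ij} x_j), 1 ≤ i ≤ n, and suppose there exist k < n and m, M, δ > 0 with m ≤ x_i(t) ≤ M for i ≤ k and all t > 0, x_{k+1}(t) ≤ δ for all t > 0, and x_j(t) → 0 for j > k+1. If the k×k subsystem obtained by setting x_j = 0 for j > k has a unique positive equilibrium p (in particular the k×k matrix (a_{ij})_{i,j ≤ k} is invertible), then liminf_{T→∞} (1/T) ∫_0^T x_i(t) dt = p_i + O(δ) for 1 ≤ i ≤ k, and the same holds for the limsup; i.e., there is a constant c (depending only on the matrix data) with |limsup_T [x_i]_T − p_i| ≤ c δ and |liminf_T [x_i]_T − p_i| ≤ c δ. -/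
/-!
Indices are 0-based, so `x_k` is the coordinate bounded by `δ`.
Integrating `(log x_i)' = r_i + Σ_j a_ij x_j` and dividing by `T` gives
`(log x_i(T) - log x_i(0)) / T = r_i + Σ_j a_ij [x_j]_T`. For `i < k` the left side tends to `0`
because `x_i` stays in `[m, M]`, the averages `[x_j]_T` with `j > k` tend to `0`, and `[x_k]_T` is
eventually below `2δ`. Subtracting the equilibrium equations, the truncated matrix applied to
`[x]_T - p` is therefore eventually `O(δ)`; since that matrix is invertible, `[x_i]_T - p_i` is
eventually `O(δ)`, which bounds both the limsup and the liminf.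
-/

open Filter Finset

lemma abs_limsup_sub_le_and_abs_liminf_sub_le {α : Type*} {l : Filter α} [NeBot l]
    {u : α → ℝ} {a b : ℝ} (h : ∀ᶠ x in l, |u x - a| ≤ b) :
    |limsup u l - a| ≤ b ∧ |liminf u l - a| ≤ b := by
  have hlo : ∀ᶠ x in l, a - b ≤ u x := h.mono fun x hx => by linarith [(abs_le.1 hx).1]
  have hhi : ∀ᶠ x in l, u x ≤ a + b := h.mono fun x hx => by linarith [(abs_le.1 hx).2]
  have hlimsup : limsup u l ≤ a + b :=
    limsup_le_of_le (isCoboundedUnder_le_of_eventually_le l hlo) hhi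
  have hliminf : a - b ≤ liminf u l :=
    le_liminf_of_le (isCoboundedUnder_ge_of_eventually_le l hhi) hlo
  have hle : liminf u l ≤ limsup u l :=
    liminf_le_limsup (isBoundedUnder_of_eventually_le hhi) (isBoundedUnder_of_eventually_ge hlo)
  constructor <;> rw [abs_le] <;> constructor <;> linarith

noncomputable def timeAverage (f : ℝ → ℝ) (T : ℝ) : ℝ := 1 / T * ∫ t in (0 : ℝ)..T, f t

lemma eventually_abs_timeAverage_lt {f : ℝ → ℝ} {b b' : ℝ}
    (hf : ∀ T, IntervalIntegrable f MeasureTheory.volume 0 T)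
    (hfb : ∀ᶠ t in atTop, |f t| ≤ b) (hb : b < b') :
    ∀ᶠ T in atTop, |timeAverage f T| < b' := by
  obtain ⟨t₀, ht₀⟩ := eventually_atTop.1 (hfb.and (eventually_ge_atTop 0))
  set I := |∫ t in (0 : ℝ)..t₀, f t|
  have hb0 : 0 ≤ b := (abs_nonneg _).trans (ht₀ t₀ le_rfl).1
  have hI : ∀ᶠ T in atTop, I / T < b' - b :=
    (tendsto_const_nhds.div_atTop tendsto_id).eventually (gt_mem_nhds (sub_pos.2 hb))
  filter_upwards [hI, eventually_gt_atTop t₀] with T hIT hT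
  have hT0 : 0 < T := (ht₀ t₀ le_rfl).2.trans_lt hT
  have htail : |∫ t in t₀..T, f t| ≤ b * T := by
    refine (intervalIntegral.norm_integral_le_of_norm_le_const (f := f) (C := b)
      fun t ht => ?_).trans ?_
    · rw [Set.uIoc_of_le hT.le] at ht
      exact (ht₀ t ht.1.le).1
    · rw [abs_of_pos (sub_pos.2 hT)]
      nlinarith [(ht₀ t₀ le_rfl).2]
  have hint : |∫ t in (0 : ℝ)..T, f t| ≤ I + b * T := by
    rw [← intervalIntegral.integral_add_adjacent_intervals (hf t₀) ((hf t₀).symm.trans (hf T))]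
    exact (abs_add_le _ _).trans (add_le_add_right htail _)
  calc |timeAverage f T| = |∫ t in (0 : ℝ)..T, f t| / T := by
        rw [timeAverage, abs_mul, abs_of_pos (one_div_pos.2 hT0)]; ring
    _ ≤ (I + b * T) / T := by gcongr
    _ = I / T + b := by field_simp
    _ < b' := by linarith

lemma tendsto_timeAverage_zero {f : ℝ → ℝ}
    (hf : ∀ T, IntervalIntegrable f MeasureTheory.volume 0 T) (h : Tendsto f atTop (nhds 0)) :
    Tendsto (timeAverage f) atTop (nhds 0) := by
  refine Metric.tendsto_nhds.2 fun ε hε => ?_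
  have hf2 : ∀ᶠ t in atTop, |f t| ≤ ε / 2 :=
    (Metric.tendsto_nhds.1 h (ε / 2) (by positivity)).mono fun t ht => by
      simpa [Real.dist_eq] using ht.le
  simpa [Real.dist_eq] using eventually_abs_timeAverage_lt hf hf2 (half_lt_self hε)

lemma log_sub_log_eq_integral_of_hasDerivAt_mul {x g : ℝ → ℝ} (hx : ∀ t, 0 < x t)
    (hg : Continuous g) (hderiv : ∀ t, HasDerivAt x (x t * g t) t) (T : ℝ) :
    Real.log (x T) - Real.log (x 0) = ∫ t in (0 : ℝ)..T, g t := by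
  refine (intervalIntegral.integral_eq_sub_of_hasDerivAt (f := fun t => Real.log (x t))
    (fun t _ => ?_) (hg.intervalIntegrable 0 T)).symm
  simpa [mul_div_cancel_left₀ _ (hx t).ne'] using (hderiv t).log (hx t).ne'

lemma exists_abs_le_mul_of_abs_sum_mul_le (k : ℕ) (A : ℕ → ℕ → ℝ)
    (hinv : ∀ v : ℕ → ℝ, (∀ i < k, ∑ j ∈ range k, A i j * v j = 0) → ∀ j < k, v j = 0) :
    ∃ C > (0 : ℝ), ∀ (v : ℕ → ℝ) (ε : ℝ), (∀ i < k, |∑ j ∈ range k, A i j * v j| ≤ ε) →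
      ∀ j < k, |v j| ≤ C * ε := by
  let L := Matrix.mulVecLin (Matrix.of fun i j : Fin k => A i j)
  have hL : ∀ (v : ℕ → ℝ) (i : Fin k), L (fun j => v j) i = ∑ j ∈ range k, A i j * v j := by
    intro v i
    simp [L, Matrix.mulVec, dotProduct, Fin.sum_univ_eq_sum_range (fun j => A i j * v j)]
  have hker : LinearMap.ker L = ⊥ := by
    refine (LinearMap.ker_eq_bot').2 fun w hw => funext fun j => ?_
    simpa using hinv (fun j => if h : j < k then w ⟨j, h⟩ else 0)
      (fun i hi => by rw [← hL _ ⟨i, hi⟩]; simpa [funext_iff] using congrFun hw ⟨i, hi⟩) j j.2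
  obtain ⟨K, hK0, hK⟩ := L.exists_antilipschitzWith hker
  refine ⟨K, hK0, fun v ε hv j hj => ?_⟩
  have : Nonempty (Fin k) := ⟨⟨j, hj⟩⟩
  calc |v j| = ‖(fun j : Fin k => v j) ⟨j, hj⟩‖ := rfl
    _ ≤ ‖fun j : Fin k => v j‖ := norm_le_pi_norm (fun j : Fin k => v j) ⟨j, hj⟩
    _ ≤ K * ‖L fun j => v j‖ := hK.le_mul_norm (map_zero L) _
    _ ≤ K * ε := by
      gcongr
      exact (pi_norm_le_iff_of_nonempty _).2 fun i => by rw [hL]; exact hv i i.2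

section LotkaVolterra

variable {n : ℕ} {r : ℕ → ℝ} {A : ℕ → ℕ → ℝ} {x : ℝ → ℕ → ℝ}

lemma continuous_of_lotkaVolterra
    (hderiv : ∀ t, ∀ i < n, HasDerivAt (fun s => x s i)
      (x t i * (r i + ∑ j ∈ range n, A i j * x t j)) t) {j : ℕ} (hj : j < n) :
    Continuous fun t => x t j :=
  continuous_iff_continuousAt.2 fun t => (hderiv t j hj).continuousAt

lemma one_div_mul_log_sub_log_eq_timeAverage
    (hderiv : ∀ t, ∀ i < n, HasDerivAt (fun s => x s i)
      (x t i * (r i + ∑ j ∈ range n, A i j * x t j)) t)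
    (hpos : ∀ t, ∀ i < n, 0 < x t i) {i : ℕ} (hi : i < n) {T : ℝ} (hT : T ≠ 0) :
    1 / T * (Real.log (x T i) - Real.log (x 0 i)) =
      r i + ∑ j ∈ range n, A i j * timeAverage (fun t => x t j) T := by
  have hcont : ∀ j ∈ range n, Continuous fun t => A i j * x t j := fun j hj =>
    continuous_const.mul (continuous_of_lotkaVolterra hderiv (mem_range.1 hj))
  have hrate : Continuous fun t => r i + ∑ j ∈ range n, A i j * x t j :=
    continuous_const.add (continuous_finsetSum _ hcont)
  rw [log_sub_log_eq_integral_of_hasDerivAt_mul (hpos · i hi) hrate (hderiv · i hi),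
    intervalIntegral.integral_add intervalIntegrable_const
      ((continuous_finsetSum _ hcont).intervalIntegrable 0 T),
    intervalIntegral.integral_finsetSum fun j hj => (hcont j hj).intervalIntegrable 0 T]
  simp only [intervalIntegral.integral_const, intervalIntegral.integral_const_mul, timeAverage,
    smul_eq_mul, sub_zero, mul_add, mul_sum]
  field_simp

lemma tendsto_add_sum_mul_timeAverage_zero
    (hderiv : ∀ t, ∀ i < n, HasDerivAt (fun s => x s i)
      (x t i * (r i + ∑ j ∈ range n, A i j * x t j)) t)
    (hpos : ∀ t, ∀ i < n, 0 < x t i) {i : ℕ} (hi : i < n) {m M : ℝ} (hm : 0 < m)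
    (hbound : ∀ t > (0 : ℝ), m ≤ x t i ∧ x t i ≤ M) :
    Tendsto (fun T => r i + ∑ j ∈ range n, A i j * timeAverage (fun t => x t j) T)
      atTop (nhds 0) := by
  have hlog : IsBoundedUnder (· ≤ ·) atTop
      fun T => ‖Real.log (x T i) - Real.log (x 0 i)‖ := by
    refine isBoundedUnder_of_eventually_le (a := max |Real.log m| |Real.log M| +
      |Real.log (x 0 i)|) ((eventually_gt_atTop 0).mono fun T hT => ?_)
    obtain ⟨hmT, hMT⟩ := hbound T hT
    have hlogT : |Real.log (x T i)| ≤ max |Real.log m| |Real.log M| :=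
      abs_le_max_abs_abs (Real.log_le_log hm hmT) (Real.log_le_log (hpos T i hi) hMT)
    exact (norm_sub_le _ _).trans (add_le_add_left hlogT _)
  have hinv : Tendsto (fun T : ℝ => 1 / T) atTop (nhds 0) :=
    tendsto_const_nhds.div_atTop tendsto_id
  refine (hinv.zero_mul_isBoundedUnder_le hlog).congr'
    ((eventually_gt_atTop 0).mono fun T hT => ?_)
  exact one_div_mul_log_sub_log_eq_timeAverage hderiv hpos hi hT.ne'

lemma tendsto_truncated_residual_zero {k : ℕ} (hk : k < n) {p : ℕ → ℝ} {i : ℕ}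
    (hp : r i + ∑ j ∈ range k, A i j * p j = 0)
    (hderiv : ∀ t, ∀ i < n, HasDerivAt (fun s => x s i)
      (x t i * (r i + ∑ j ∈ range n, A i j * x t j)) t)
    (hrate : Tendsto (fun T => r i + ∑ j ∈ range n, A i j * timeAverage (fun t => x t j) T)
      atTop (nhds 0))
    (htend : ∀ j, k < j → j < n → Tendsto (fun t => x t j) atTop (nhds 0)) :
    Tendsto (fun T => ∑ j ∈ range k, A i j * (timeAverage (fun t => x t j) T - p j) +
      A i k * timeAverage (fun t => x t k) T) atTop (nhds 0) := by
  have htail : Tendsto (fun T => ∑ j ∈ Ico (k + 1) n, A i j * timeAverage (fun t => x t j) T)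
      atTop (nhds 0) := by
    simpa using tendsto_finsetSum _ fun j hj =>
      (tendsto_timeAverage_zero
        (fun T => (continuous_of_lotkaVolterra hderiv (mem_Ico.1 hj).2).intervalIntegrable 0 T)
        (htend j (mem_Ico.1 hj).1 (mem_Ico.1 hj).2)).const_mul (A i j)
  have hlim := hrate.sub htail
  rw [sub_zero] at hlim
  refine hlim.congr fun T => ?_
  rw [← sum_range_add_sum_Ico _ hk, sum_range_succ]
  simp only [mul_sub, sum_sub_distrib]
  linarith

lemma eventually_abs_sum_mul_timeAverage_sub_le {k : ℕ} (hk : k < n) {p : ℕ → ℝ}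
    (hp : ∀ i < k, r i + ∑ j ∈ range k, A i j * p j = 0)
    (hderiv : ∀ t, ∀ i < n, HasDerivAt (fun s => x s i)
      (x t i * (r i + ∑ j ∈ range n, A i j * x t j)) t)
    (hpos : ∀ t, ∀ i < n, 0 < x t i) {δ m M : ℝ} (hδ : 0 < δ) (hm : 0 < m)
    (hbound : ∀ t > (0 : ℝ), ∀ i < k, m ≤ x t i ∧ x t i ≤ M)
    (hδx : ∀ t > (0 : ℝ), x t k ≤ δ)
    (htend : ∀ j, k < j → j < n → Tendsto (fun t => x t j) atTop (nhds 0)) :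
    ∀ᶠ T in atTop, ∀ i < k,
      |∑ j ∈ range k, A i j * (timeAverage (fun t => x t j) T - p j)| ≤
        (2 * ∑ i ∈ range k, |A i k| + 1) * δ := by
  set u : ℕ → ℝ → ℝ := fun j => timeAverage fun t => x t j
  have hres : ∀ᶠ T in atTop, ∀ i ∈ range k,
      |∑ j ∈ range k, A i j * (u j T - p j) + A i k * u k T| < δ := by
    refine (eventually_all_finset _).2 fun i hi => ?_
    have hi := mem_range.1 hi
    simpa [Real.dist_eq] using Metric.tendsto_nhds.1 (tendsto_truncated_residual_zero hk
      (hp i hi) hderiv (tendsto_add_sum_mul_timeAverage_zero hderiv hpos (hi.trans hk) hm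
        fun t ht => hbound t ht i hi) htend) δ hδ
  have huk : ∀ᶠ T in atTop, |u k T| < 2 * δ :=
    eventually_abs_timeAverage_lt
      (fun T => (continuous_of_lotkaVolterra hderiv hk).intervalIntegrable 0 T)
      ((eventually_gt_atTop 0).mono fun t ht => by
        rw [abs_of_pos (hpos t k hk)]; exact hδx t ht)
      (by linarith)
  filter_upwards [hres, huk] with T hres huk i hi
  have hAk : |A i k * u k T| ≤ (∑ i ∈ range k, |A i k|) * (2 * δ) := by
    rw [abs_mul]
    exact mul_le_mul (single_le_sum (fun j _ => abs_nonneg (A j k)) (mem_range.2 hi))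
      huk.le (abs_nonneg _) (sum_nonneg fun j _ => abs_nonneg _)
  calc |∑ j ∈ range k, A i j * (u j T - p j)|
      = |(∑ j ∈ range k, A i j * (u j T - p j) + A i k * u k T) - A i k * u k T| := by
        rw [add_sub_cancel_right]
    _ ≤ |∑ j ∈ range k, A i j * (u j T - p j) + A i k * u k T| + |A i k * u k T| :=
        abs_sub _ _
    _ ≤ δ + (∑ i ∈ range k, |A i k|) * (2 * δ) := add_le_add (hres i (mem_range.2 hi)).le hAk
    _ = (2 * ∑ i ∈ range k, |A i k| + 1) * δ := by ring

end LotkaVolterra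

theorem statement9_general
    (n k : ℕ) (hk : k < n) (r : ℕ → ℝ) (A : ℕ → ℕ → ℝ)
    (p : ℕ → ℝ)
    (hp : ∀ i < k, 0 < p i ∧ r i + ∑ j ∈ Finset.range k, A i j * p j = 0)
    (hinv : ∀ v : ℕ → ℝ, (∀ i < k, ∑ j ∈ Finset.range k, A i j * v j = 0) → ∀ j < k, v j = 0) :
    ∃ c > (0:ℝ), ∀ (x : ℝ → ℕ → ℝ) (δ m M B : ℝ), 0 < δ → 0 < m → 0 < M →
      (∀ t, ∀ i < n, HasDerivAt (fun s => x s i)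
        (x t i * (r i + ∑ j ∈ Finset.range n, A i j * x t j)) t) →
      (∀ t, ∀ i < n, 0 < x t i) →
      (∀ t, ∀ i < n, x t i ≤ B) →
      (∀ t > (0:ℝ), ∀ i < k, m ≤ x t i ∧ x t i ≤ M) →
      (∀ t > (0:ℝ), x t k ≤ δ) →
      (∀ j, k < j → j < n → Filter.Tendsto (fun t => x t j) Filter.atTop (nhds 0)) →
      ∀ i < k,
        |Filter.limsup (fun T => (1 / T) * ∫ t in (0:ℝ)..T, x t i) Filter.atTop - p i|
          ≤ c * δ ∧
        |Filter.liminf (fun T => (1 / T) * ∫ t in (0:ℝ)..T, x t i) Filter.atTop - p i|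
          ≤ c * δ := by
  obtain ⟨C, hC, hCinv⟩ := exists_abs_le_mul_of_abs_sum_mul_le k A hinv
  refine ⟨C * (2 * ∑ i ∈ range k, |A i k| + 1), by positivity,
    fun x δ m M B hδ hm _ hderiv hpos _ hbound hδx htend i hi => ?_⟩
  refine abs_limsup_sub_le_and_abs_liminf_sub_le (u := timeAverage fun t => x t i) ?_
  filter_upwards [eventually_abs_sum_mul_timeAverage_sub_le hk (fun i hi => (hp i hi).2) hderiv
    hpos hδ hm hbound hδx htend] with T hT
  rw [mul_assoc]
  exact hCinv (fun j => timeAverage (fun t => x t j) T - p j) _ hT i hi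

/-- time-average lemma for perturbed Lotka–Volterra systems, Lemma 1.2 of
Korytowski–Smith: there is a constant `c` depending only on the matrix data such that for
every bounded positive solution `x` of `x_i' = x_i(r_i + Σ_j a_{ij} x_j)` with
`m ≤ x_i(t) ≤ M` for `i ≤ k`, `x_{k+1}(t) ≤ δ`, and `x_j(t) → 0` for `j > k+1`, the limsup and
liminf of the time averages `(1/T)∫_0^T x_i` differ from the equilibrium `p_i` of the
truncated `k × k` subsystem by at most `c δ`, for `1 ≤ i ≤ k` (0-based indexing). -/
theorem statement9
    (n k : ℕ) (hk : k < n) (r : ℕ → ℝ) (A : ℕ → ℕ → ℝ)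
    (p : ℕ → ℝ)
    (hp : ∀ i < k, 0 < p i ∧ r i + ∑ j ∈ Finset.range k, A i j * p j = 0)
    (hpu : ∀ q : ℕ → ℝ, (∀ i < k, 0 < q i ∧ r i + ∑ j ∈ Finset.range k, A i j * q j = 0) →
      ∀ i < k, q i = p i)
    (hinv : ∀ v : ℕ → ℝ, (∀ i < k, ∑ j ∈ Finset.range k, A i j * v j = 0) → ∀ j < k, v j = 0) :
    ∃ c > (0:ℝ), ∀ (x : ℝ → ℕ → ℝ) (δ m M B : ℝ), 0 < δ → 0 < m → 0 < M →
      (∀ t, ∀ i < n, HasDerivAt (fun s => x s i)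
        (x t i * (r i + ∑ j ∈ Finset.range n, A i j * x t j)) t) →
      (∀ t, ∀ i < n, 0 < x t i) →
      (∀ t, ∀ i < n, x t i ≤ B) →
      (∀ t > (0:ℝ), ∀ i < k, m ≤ x t i ∧ x t i ≤ M) →
      (∀ t > (0:ℝ), x t k ≤ δ) →
      (∀ j, k < j → j < n → Filter.Tendsto (fun t => x t j) Filter.atTop (nhds 0)) →
      ∀ i < k,
        |Filter.limsup (fun T => (1 / T) * ∫ t in (0:ℝ)..T, x t i) Filter.atTop - p i|
          ≤ c * δ ∧
        |Filter.liminf (fun T => (1 / T) * ∫ t in (0:ℝ)..T, x t i) Filter.atTop - p i|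
          ≤ c * δ :=
  statement9_general n k hk r A p hp hinv
end

section
/- For the nested infection network system written in equilibrium-centered form, define the Lyapunov function V = Σ_i a (H_i − H_i* − H_i* log(H_i/H_i*)) + Σ_i (a/(e_i n_i)) (P_i − P_i* − P_i* log(P_i/P_i*)), where all competition coefficients equal a > 0. Then along any positive solution, dV/dt = −a²(Σ_i H_i − Σ_i H_i*)², which is ≤ 0. -/
open Finset

/-!
Along a solution, each Volterra term `U(x, x*)` has derivative `(x − x*) · (x'/x)`, so `dV/dt`
is a quadratic form in the deviations `h_i = H_i − H_i*`, `p_i = P_i − P_i*`. The weights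
`a/(e_i n_i)` make the mixed terms `−a Σ_{i ≤ j} h_i p_j` (from the `H`-equations) and
`+a Σ_{j ≤ i} p_i h_j` (from the `P`-equations) cancel, leaving `−a² (Σ_i h_i)²`.
-/

/-- No sign condition on `c` is needed: for `c ≠ 0`, `Real.log (f s / c)` differs from
`Real.log |f s|` by a constant, and for `c = 0` it is `Real.log 0 = 0`. -/
theorem hasDerivAt_volterra {f : ℝ → ℝ} {g t : ℝ} (c : ℝ) (hf : HasDerivAt f (f t * g) t)
    (ht : f t ≠ 0) :
    HasDerivAt (fun s => f s - c - c * Real.log (f s / c)) ((f t - c) * g) t := by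
  rcases eq_or_ne c 0 with rfl | hc
  · simpa using hf
  have hlog : HasDerivAt (fun s => Real.log (f s / c)) g t := by
    refine ((hf.div_const c).log (div_ne_zero ht hc)).congr_deriv ?_
    field_simp
  exact ((hf.sub_const c).sub (hlog.const_mul c)).congr_deriv (by ring)

theorem sum_mul_sum_Ico_eq_sum_mul_sum_range_succ {R : Type*} [CommSemiring R] (n : ℕ)
    (x y : ℕ → R) :
    ∑ i ∈ range n, x i * ∑ j ∈ Ico i n, y j = ∑ j ∈ range n, y j * ∑ i ∈ range (j + 1), x i := by
  simp only [mul_sum, range_eq_Ico]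
  rw [sum_Ico_Ico_comm]
  exact sum_congr rfl fun j _ => sum_congr rfl fun i _ => mul_comm _ _

theorem nin_lyapunov_derivative_eq {R : Type*} [CommRing R] (n : ℕ) (a : R)
    (h hs p ps : ℕ → R) :
    (∑ i ∈ range n, a * ((h i - hs i) *
        ((∑ j ∈ range n, a * (hs j - h j)) + ∑ j ∈ Ico i n, (ps j - p j))))
      + ∑ i ∈ range n, a * ((p i - ps i) * ∑ j ∈ range (i + 1), (h j - hs j))
      = -(a ^ 2) * ((∑ i ∈ range n, h i) - ∑ i ∈ range n, hs i) ^ 2 := by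
  have hcross := sum_mul_sum_Ico_eq_sum_mul_sum_range_succ n (fun i => h i - hs i)
    (fun i => p i - ps i)
  simp only [mul_add, mul_sub, sum_add_distrib, sum_sub_distrib, ← sum_mul, ← mul_sum]
    at hcross ⊢
  linear_combination (-a) * hcross

theorem statement12_general
    (n : ℕ) (a : ℝ) (e ν Hs Ps : ℕ → ℝ)
    (he : ∀ i < n, 0 < e i) (hν : ∀ i < n, 0 < ν i)
    (H P : ℝ → ℕ → ℝ)
    (hpos : ∀ t, ∀ i < n, 0 < H t i ∧ 0 < P t i)
    (hH : ∀ t, ∀ i < n, HasDerivAt (fun s => H s i)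
      (H t i * ((∑ j ∈ Finset.range n, a * (Hs j - H t j))
        + ∑ j ∈ Finset.Ico i n, (Ps j - P t j))) t)
    (hP : ∀ t, ∀ i < n, HasDerivAt (fun s => P s i)
      (e i * ν i * P t i * ∑ j ∈ Finset.range (i + 1), (H t j - Hs j)) t) :
    ∀ t : ℝ,
      HasDerivAt (fun s =>
          (∑ i ∈ Finset.range n, a * (H s i - Hs i - Hs i * Real.log (H s i / Hs i)))
          + ∑ i ∈ Finset.range n,
              a / (e i * ν i) * (P s i - Ps i - Ps i * Real.log (P s i / Ps i)))
        (-(a ^ 2) * ((∑ i ∈ Finset.range n, H t i) - ∑ i ∈ Finset.range n, Hs i) ^ 2) t ∧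
      -(a ^ 2) * ((∑ i ∈ Finset.range n, H t i) - ∑ i ∈ Finset.range n, Hs i) ^ 2 ≤ 0 := by
  intro t
  refine ⟨?_, by rw [neg_mul]; exact neg_nonpos.mpr (by positivity)⟩
  rw [← nin_lyapunov_derivative_eq n a (H t) Hs (P t) Ps]
  apply HasDerivAt.add <;> apply HasDerivAt.fun_sum <;> intro i hi <;> rw [Finset.mem_range] at hi
  · exact (hasDerivAt_volterra (Hs i) (hH t i hi) (hpos t i hi).1.ne').const_mul a
  · have heν : e i * ν i ≠ 0 := (mul_pos (he i hi) (hν i hi)).ne'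
    have hPi : HasDerivAt (fun s => P s i)
        (P t i * (e i * ν i * ∑ j ∈ Finset.range (i + 1), (H t j - Hs j))) t :=
      (hP t i hi).congr_deriv (by ring)
    refine ((hasDerivAt_volterra (Ps i) hPi (hpos t i hi).2.ne').const_mul
      (a / (e i * ν i))).congr_deriv ?_
    rw [div_mul_eq_mul_div, div_eq_iff heν]
    ring

/-- with equal competition coefficients `a_j = a`, the Volterra-type Lyapunov
function `V = Σ_i a U(H_i, H_i*) + Σ_i (a/(e_i n_i)) U(P_i, P_i*)` satisfies
`dV/dt = −a²(Σ_i H_i − Σ_i H_i*)² ≤ 0` along any positive solution of the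
equilibrium-centered NIN system. -/
theorem statement12
    (n : ℕ) (a : ℝ) (ha : 0 < a) (e ν Hs Ps : ℕ → ℝ)
    (he : ∀ i < n, 0 < e i) (hν : ∀ i < n, 0 < ν i)
    (hHs : ∀ i < n, 0 < Hs i) (hPs : ∀ i < n, 0 < Ps i)
    (H P : ℝ → ℕ → ℝ)
    (hpos : ∀ t, ∀ i < n, 0 < H t i ∧ 0 < P t i)
    (hH : ∀ t, ∀ i < n, HasDerivAt (fun s => H s i)
      (H t i * ((∑ j ∈ Finset.range n, a * (Hs j - H t j))
        + ∑ j ∈ Finset.Ico i n, (Ps j - P t j))) t)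
    (hP : ∀ t, ∀ i < n, HasDerivAt (fun s => P s i)
      (e i * ν i * P t i * ∑ j ∈ Finset.range (i + 1), (H t j - Hs j)) t) :
    ∀ t : ℝ,
      HasDerivAt (fun s =>
          (∑ i ∈ Finset.range n, a * (H s i - Hs i - Hs i * Real.log (H s i / Hs i)))
          + ∑ i ∈ Finset.range n,
              a / (e i * ν i) * (P s i - Ps i - Ps i * Real.log (P s i / Ps i)))
        (-(a ^ 2) * ((∑ i ∈ Finset.range n, H t i) - ∑ i ∈ Finset.range n, Hs i) ^ 2) t ∧
      -(a ^ 2) * ((∑ i ∈ Finset.range n, H t i) - ∑ i ∈ Finset.range n, Hs i) ^ 2 ≤ 0 :=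
  statement12_general n a e ν Hs Ps he hν H P hpos hH hP
end

section
/- For an entire bounded solution of the NIN limit-set system H_i' = H_i Σ_{j ≥ i}(P_j* − P_j), P_i' = e_i n_i P_i Σ_{j ≤ i}(H_j − H_j*) that is bounded above and away from zero in every component and satisfies Σ_i H_i(t) = Σ_i H_i* for all t, the solution must be identically equal to the equilibrium: H_i(t) ≡ H_i* and P_i(t) ≡ P_i* for all i. -/
/-!
Downward induction on the index `k`. Once the components `j > k` sit at the equilibrium, the
constraint `Σ H_j = Σ H_j*` gives `Σ_{j ≤ k} (H_j - H_j*) = 0`, so `P_k` is constant and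
`H_k' = (P_k* - P_k) H_k` has a constant coefficient. A nonzero solution `f(0) e^{ct}` of
`f' = c f` bounded on all of `ℝ` has `c = 0`; hence `P_k = P_k*` and `H_k` is constant. For
`k = 0` the constraint then reads `H_0 = H_0*`; otherwise the equation of `P_{k-1}` has the
constant coefficient `e_{k-1} n_{k-1} (H_k* - H_k)`, which must vanish for the same reason.
-/

open Finset

theorem eq_mul_exp_of_hasDerivAt_const_mul {f : ℝ → ℝ} {c : ℝ}
    (hf : ∀ t, HasDerivAt f (c * f t) t) (t : ℝ) :
    f t = f 0 * Real.exp (c * t) := by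
  have hg : ∀ s, HasDerivAt (fun s => f s * Real.exp (-c * s)) 0 s := fun s =>
    ((hf s).fun_mul (((hasDerivAt_id s).const_mul (-c)).exp)).congr_deriv
      (by simp only [id_eq, mul_one]; ring)
  have hgt := is_const_of_deriv_eq_zero (fun s => (hg s).differentiableAt)
    (fun s => (hg s).deriv) t 0
  simp only [mul_zero, Real.exp_zero, mul_one] at hgt
  rw [← hgt, mul_assoc, ← Real.exp_add, neg_mul, neg_add_cancel, Real.exp_zero, mul_one]

theorem eq_zero_of_hasDerivAt_const_mul_of_abs_le {f : ℝ → ℝ} {c B : ℝ}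
    (hf : ∀ t, HasDerivAt f (c * f t) t) (h0 : f 0 ≠ 0) (hB : ∀ t, |f t| ≤ B) :
    c = 0 := by
  by_contra hc
  have ha : 0 < |f 0| := abs_pos.mpr h0
  have hB0 : 0 ≤ B := (abs_nonneg _).trans (hB 0)
  -- at `t = B / (|f 0| c)` the bound `e^x ≥ 1 + x` already gives `|f t| ≥ |f 0| + B`
  set t := B / (|f 0| * c)
  have hct : c * t = B / |f 0| := by simp only [t]; field_simp
  have hlow : |f 0| + B ≤ |f t| := by
    rw [eq_mul_exp_of_hasDerivAt_const_mul hf t, abs_mul, Real.abs_exp, hct]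
    calc |f 0| + B = |f 0| * (B / |f 0| + 1) := by field_simp; ring
      _ ≤ |f 0| * Real.exp (B / |f 0|) := by gcongr; exact Real.add_one_le_exp _
  linarith [hB t]

theorem const_of_hasDerivAt_const_mul_of_abs_le {f : ℝ → ℝ} {c B : ℝ}
    (hf : ∀ t, HasDerivAt f (c * f t) t) (h0 : f 0 ≠ 0) (hB : ∀ t, |f t| ≤ B) (t : ℝ) :
    f t = f 0 := by
  rw [eq_mul_exp_of_hasDerivAt_const_mul hf t,
    eq_zero_of_hasDerivAt_const_mul_of_abs_le hf h0 hB, zero_mul, Real.exp_zero, mul_one]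

theorem Finset.sum_range_eq_zero_of_tail {M : Type*} [AddCommMonoid M] {f : ℕ → M} {k n : ℕ}
    (hkn : k ≤ n) (h : ∑ i ∈ range n, f i = 0) (htail : ∀ i, k ≤ i → i < n → f i = 0) :
    ∑ i ∈ range k, f i = 0 := by
  rwa [← sum_range_add_sum_Ico f hkn,
    sum_eq_zero fun i hi => htail i (mem_Ico.mp hi).1 (mem_Ico.mp hi).2, add_zero] at h

/-- `(Hs, Ps)` is the paper's equilibrium `(H*, P*)` and `ν i` its `n_i`. -/
structure IsNINLimitSolution (n : ℕ) (e ν Hs Ps : ℕ → ℝ) (H P : ℝ → ℕ → ℝ) (p B : ℝ) :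
    Prop where
  bounds : ∀ t : ℝ, ∀ i < n, p ≤ H t i ∧ H t i ≤ B ∧ p ≤ P t i ∧ P t i ≤ B
  hasDerivAt_H : ∀ t : ℝ, ∀ i < n, HasDerivAt (fun s => H s i)
    (H t i * ∑ j ∈ Ico i n, (Ps j - P t j)) t
  hasDerivAt_P : ∀ t : ℝ, ∀ i < n, HasDerivAt (fun s => P s i)
    (e i * ν i * P t i * ∑ j ∈ range (i + 1), (H t j - Hs j)) t
  sum_H : ∀ t : ℝ, ∑ i ∈ range n, H t i = ∑ i ∈ range n, Hs i

namespace IsNINLimitSolution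

variable {n : ℕ} {e ν Hs Ps : ℕ → ℝ} {H P : ℝ → ℕ → ℝ} {p B : ℝ} {k : ℕ}

theorem abs_H_le (hs : IsNINLimitSolution n e ν Hs Ps H P p B) (hp : 0 < p) (t : ℝ) (hk : k < n) :
    |H t k| ≤ B := by
  obtain ⟨hpH, hHB, -⟩ := hs.bounds t k hk
  exact abs_le.mpr ⟨by linarith, hHB⟩

theorem abs_P_le (hs : IsNINLimitSolution n e ν Hs Ps H P p B) (hp : 0 < p) (t : ℝ) (hk : k < n) :
    |P t k| ≤ B := by
  obtain ⟨-, -, hpP, hPB⟩ := hs.bounds t k hk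
  exact abs_le.mpr ⟨by linarith, hPB⟩

theorem sum_range_sub_eq_zero (hs : IsNINLimitSolution n e ν Hs Ps H P p B) (hk : k ≤ n)
    (htail : ∀ j, k ≤ j → j < n → ∀ t, H t j = Hs j) (t : ℝ) :
    ∑ j ∈ range k, (H t j - Hs j) = 0 := by
  refine sum_range_eq_zero_of_tail hk ?_ fun j hkj hjn => by rw [htail j hkj hjn t, sub_self]
  rw [sum_sub_distrib, hs.sum_H t, sub_self]

theorem P_eq_and_H_const (hs : IsNINLimitSolution n e ν Hs Ps H P p B) (hp : 0 < p)
    (hk : k < n) (htail : ∀ j, k < j → j < n → ∀ t, H t j = Hs j ∧ P t j = Ps j) :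
    (∀ t, P t k = Ps k) ∧ ∀ t, H t k = H 0 k := by
  have hPk_const : ∀ t, P t k = P 0 k := by
    have hd : ∀ t, HasDerivAt (fun s => P s k) 0 t := fun t => by
      simpa only [hs.sum_range_sub_eq_zero hk fun j hj hjn s => (htail j hj hjn s).1, mul_zero]
        using hs.hasDerivAt_P t k hk
    exact fun t => is_const_of_deriv_eq_zero (fun x => (hd x).differentiableAt)
      (fun x => (hd x).deriv) t 0
  have hHk : ∀ t, HasDerivAt (fun s => H s k) ((Ps k - P 0 k) * H t k) t := fun t => by
    have hdrive : ∑ j ∈ Ico k n, (Ps j - P t j) = Ps k - P 0 k := by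
      rw [sum_eq_sum_Ico_succ_bot hk, hPk_const t,
        sum_eq_zero fun j hj => by
          rw [(htail j (mem_Ico.mp hj).1 (mem_Ico.mp hj).2 t).2, sub_self],
        add_zero]
    simpa only [hdrive, mul_comm] using hs.hasDerivAt_H t k hk
  have hH0 : H 0 k ≠ 0 := (hp.trans_le (hs.bounds 0 k hk).1).ne'
  have hc := eq_zero_of_hasDerivAt_const_mul_of_abs_le hHk hH0 (hs.abs_H_le hp · hk)
  exact ⟨fun t => by rw [hPk_const t]; linarith,
    const_of_hasDerivAt_const_mul_of_abs_le hHk hH0 (hs.abs_H_le hp · hk)⟩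

theorem eq_of_tail (hs : IsNINLimitSolution n e ν Hs Ps H P p B)
    (he : ∀ i < n, 0 < e i) (hν : ∀ i < n, 0 < ν i) (hp : 0 < p)
    (hk : k < n) (htail : ∀ j, k < j → j < n → ∀ t, H t j = Hs j ∧ P t j = Ps j) (t : ℝ) :
    H t k = Hs k ∧ P t k = Ps k := by
  obtain ⟨hPk, hHk_const⟩ := hs.P_eq_and_H_const hp hk htail
  refine ⟨?_, hPk t⟩
  have hzero := hs.sum_range_sub_eq_zero (k := k + 1) hk fun j hj hjn s => (htail j hj hjn s).1
  rw [hHk_const t]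
  cases k with
  | zero => simpa [sub_eq_zero] using hzero 0
  | succ m =>
    have hm : m < n := by omega
    have hdrive : ∀ s, ∑ j ∈ range (m + 1), (H s j - Hs j) = Hs (m + 1) - H 0 (m + 1) :=
      fun s => by
        have := hzero s
        rw [sum_range_succ, hHk_const s] at this
        linarith
    have hPm : ∀ s, HasDerivAt (fun s => P s m)
        (e m * ν m * (Hs (m + 1) - H 0 (m + 1)) * P s m) s := fun s => by
      simpa only [hdrive s, mul_right_comm] using hs.hasDerivAt_P s m hm
    have hc := eq_zero_of_hasDerivAt_const_mul_of_abs_le hPm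
      (hp.trans_le (hs.bounds 0 m hm).2.2.1).ne' fun s => hs.abs_P_le hp s hm
    have := (mul_eq_zero.mp hc).resolve_left (mul_pos (he m hm) (hν m hm)).ne'
    linarith

end IsNINLimitSolution

theorem statement14_general
    (n : ℕ) (e ν Hs Ps : ℕ → ℝ)
    (he : ∀ i < n, 0 < e i) (hν : ∀ i < n, 0 < ν i)
    (H P : ℝ → ℕ → ℝ) (p B : ℝ) (hp : 0 < p)
    (hbd : ∀ t : ℝ, ∀ i < n, p ≤ H t i ∧ H t i ≤ B ∧ p ≤ P t i ∧ P t i ≤ B)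
    (hH : ∀ t : ℝ, ∀ i < n, HasDerivAt (fun s => H s i)
      (H t i * ∑ j ∈ Finset.Ico i n, (Ps j - P t j)) t)
    (hP : ∀ t : ℝ, ∀ i < n, HasDerivAt (fun s => P s i)
      (e i * ν i * P t i * ∑ j ∈ Finset.range (i + 1), (H t j - Hs j)) t)
    (hsum : ∀ t : ℝ, ∑ i ∈ Finset.range n, H t i = ∑ i ∈ Finset.range n, Hs i) :
    ∀ t : ℝ, ∀ i < n, H t i = Hs i ∧ P t i = Ps i := by
  have hs : IsNINLimitSolution n e ν Hs Ps H P p B := ⟨hbd, hH, hP, hsum⟩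
  suffices ∀ k ≤ n, ∀ i, k ≤ i → i < n → ∀ t, H t i = Hs i ∧ P t i = Ps i from
    fun t i hi => this 0 (Nat.zero_le n) i (Nat.zero_le i) hi t
  intro k hk
  induction hk using Nat.decreasingInduction with
  | self => intro i hni hin; omega
  | of_succ k hk ih =>
    intro i hki hin t
    rcases hki.eq_or_lt with rfl | hlt
    · exact hs.eq_of_tail he hν hp hin ih t
    · exact ih i hlt hin t

/-- an entire solution of the NIN limit-set system
`H_i' = H_i Σ_{j ≥ i}(P_j* − P_j)`, `P_i' = e_i n_i P_i Σ_{j ≤ i}(H_j − H_j*)`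
that is bounded above and away from zero in every component and satisfies
`Σ_i H_i(t) = Σ_i H_i*` for all `t` must be identically the equilibrium `(H*, P*)`. -/
theorem statement14
    (n : ℕ) (e ν Hs Ps : ℕ → ℝ)
    (he : ∀ i < n, 0 < e i) (hν : ∀ i < n, 0 < ν i)
    (hHs : ∀ i < n, 0 < Hs i) (hPs : ∀ i < n, 0 < Ps i)
    (H P : ℝ → ℕ → ℝ) (p B : ℝ) (hp : 0 < p)
    (hbd : ∀ t : ℝ, ∀ i < n, p ≤ H t i ∧ H t i ≤ B ∧ p ≤ P t i ∧ P t i ≤ B)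
    (hH : ∀ t : ℝ, ∀ i < n, HasDerivAt (fun s => H s i)
      (H t i * ∑ j ∈ Finset.Ico i n, (Ps j - P t j)) t)
    (hP : ∀ t : ℝ, ∀ i < n, HasDerivAt (fun s => P s i)
      (e i * ν i * P t i * ∑ j ∈ Finset.range (i + 1), (H t j - Hs j)) t)
    (hsum : ∀ t : ℝ, ∑ i ∈ Finset.range n, H t i = ∑ i ∈ Finset.range n, Hs i) :
    ∀ t : ℝ, ∀ i < n, H t i = Hs i ∧ P t i = Ps i :=
  statement14_general n e ν Hs Ps he hν H P p B hp hbd hH hP hsum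
end

section
/- For the one-to-one infection network system, an equilibrium with all 2n components positive exists if and only if Q̃_n < r_j for all 1 ≤ j ≤ n, where Q̃_n = Σ_{i=1}^n a_i/e_i; in that case it is unique and given by H_j* = 1/e_j and P_j* = r_j − Q̃_n for all j. -/
open Filter Finset

/-- `Q̃_n = Σ_i a_i/e_i`. -/
noncomputable def QOIN (n : ℕ) (a e : ℕ → ℝ) : ℝ :=
  ∑ i ∈ Finset.range n, a i / e i

/-- `(h, p)` is an equilibrium of the one-to-one infection network system
`H_i' = H_i(r_i − Σ_j a_j H_j) − H_i P_i`, `P_i' = e_i n_i P_i(H_i − 1/e_i)`. -/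
def isEqOIN (n : ℕ) (r a e ν : ℕ → ℝ) (h p : ℕ → ℝ) : Prop :=
  (∀ i < n, h i * (r i - ∑ j ∈ Finset.range n, a j * h j) - h i * p i = 0) ∧
  (∀ i < n, e i * ν i * p i * (h i - 1 / e i) = 0)

/-- `(H, P)` solves the one-to-one infection network system for `t ≥ 0`. -/
def isSolOIN (n : ℕ) (r a e ν : ℕ → ℝ) (H P : ℝ → ℕ → ℝ) : Prop :=
  ∀ t ≥ (0:ℝ), ∀ i < n,
    HasDerivAt (fun s => H s i)
      (H t i * (r i - ∑ j ∈ Finset.range n, a j * H t j) - H t i * P t i) t ∧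
    HasDerivAt (fun s => P s i)
      (e i * ν i * P t i * (H t i - 1 / e i)) t

/-! The host equations force `H_i = 1/e_i` wherever `P_i ≠ 0`; then `Σ_j a_j H_j = Q̃_n`,
and the parasite equations force `P_i = r_i − Q̃_n` wherever `H_i ≠ 0`. -/

section Equilibrium

variable {n : ℕ} {r a e ν h p : ℕ → ℝ}

lemma sum_mul_eq_QOIN (hh : ∀ i < n, h i = 1 / e i) :
    ∑ j ∈ range n, a j * h j = QOIN n a e :=
  sum_congr rfl fun j hj => by rw [hh j (mem_range.mp hj), mul_one_div]

lemma isEqOIN_of_eq (hh : ∀ i < n, h i = 1 / e i) (hp : ∀ i < n, p i = r i - QOIN n a e) :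
    isEqOIN n r a e ν h p := by
  refine ⟨fun i hi => ?_, fun i hi => ?_⟩
  · rw [sum_mul_eq_QOIN hh, hp i hi]
    ring
  · rw [hh i hi, sub_self, mul_zero]

lemma isEqOIN.eq_one_div (he : ∀ i < n, e i ≠ 0) (hν : ∀ i < n, ν i ≠ 0)
    (hp : ∀ i < n, p i ≠ 0) (heq : isEqOIN n r a e ν h p) {i : ℕ} (hi : i < n) :
    h i = 1 / e i := by
  have := heq.2 i hi
  simp only [mul_eq_zero, he i hi, hν i hi, hp i hi, or_false, false_or, sub_eq_zero] at this
  exact this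

lemma isEqOIN.eq_sub_QOIN (he : ∀ i < n, e i ≠ 0) (hν : ∀ i < n, ν i ≠ 0)
    (hh : ∀ i < n, h i ≠ 0) (hp : ∀ i < n, p i ≠ 0) (heq : isEqOIN n r a e ν h p)
    {i : ℕ} (hi : i < n) :
    p i = r i - QOIN n a e := by
  have hsum := sum_mul_eq_QOIN (a := a) fun j hj => heq.eq_one_div he hν hp hj
  have := heq.1 i hi
  rw [hsum, ← mul_sub, mul_eq_zero, sub_eq_zero] at this
  exact (this.resolve_left (hh i hi)).symm

end Equilibrium

theorem statement15_general
    (n : ℕ) (r a e ν : ℕ → ℝ)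
    (he : ∀ i < n, 0 < e i) (hν : ∀ i < n, 0 < ν i) :
    ((∃ h p : ℕ → ℝ, (∀ i < n, 0 < h i ∧ 0 < p i) ∧ isEqOIN n r a e ν h p) ↔
      (∀ j < n, QOIN n a e < r j)) ∧
    (∀ h p : ℕ → ℝ, (∀ i < n, 0 < h i ∧ 0 < p i) → isEqOIN n r a e ν h p →
      ∀ j < n, h j = 1 / e j ∧ p j = r j - QOIN n a e) := by
  have he' : ∀ i < n, e i ≠ 0 := fun i hi => (he i hi).ne'
  have hν' : ∀ i < n, ν i ≠ 0 := fun i hi => (hν i hi).ne'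
  have unique : ∀ h p : ℕ → ℝ, (∀ i < n, 0 < h i ∧ 0 < p i) → isEqOIN n r a e ν h p →
      ∀ j < n, h j = 1 / e j ∧ p j = r j - QOIN n a e := by
    intro h p hpos heq j hj
    have hh : ∀ i < n, h i ≠ 0 := fun i hi => (hpos i hi).1.ne'
    have hp : ∀ i < n, p i ≠ 0 := fun i hi => (hpos i hi).2.ne'
    exact ⟨heq.eq_one_div he' hν' hp hj, heq.eq_sub_QOIN he' hν' hh hp hj⟩
  refine ⟨⟨?_, fun hQ => ?_⟩, unique⟩
  · rintro ⟨h, p, hpos, heq⟩ j hj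
    have hpj := (hpos j hj).2
    rwa [(unique h p hpos heq j hj).2, sub_pos] at hpj
  · refine ⟨fun i => 1 / e i, fun i => r i - QOIN n a e, fun i hi => ⟨?_, ?_⟩,
      isEqOIN_of_eq (fun _ _ => rfl) fun _ _ => rfl⟩
    · exact one_div_pos.mpr (he i hi)
    · exact sub_pos.mpr (hQ i hi)

/-- the one-to-one infection network system has an equilibrium with all `2n`
components positive iff `Q̃_n < r_j` for all `j`; it is then unique, with `H_j* = 1/e_j`
and `P_j* = r_j − Q̃_n`. -/
theorem statement15
    (n : ℕ) (hn : 0 < n) (r a e ν : ℕ → ℝ)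
    (hr : ∀ i < n, 0 < r i) (ha : ∀ i < n, 0 < a i)
    (he : ∀ i < n, 0 < e i) (hν : ∀ i < n, 0 < ν i) :
    ((∃ h p : ℕ → ℝ, (∀ i < n, 0 < h i ∧ 0 < p i) ∧ isEqOIN n r a e ν h p) ↔
      (∀ j < n, QOIN n a e < r j)) ∧
    (∀ h p : ℕ → ℝ, (∀ i < n, 0 < h i ∧ 0 < p i) → isEqOIN n r a e ν h p →
      ∀ j < n, h j = 1 / e j ∧ p j = r j - QOIN n a e) :=
  statement15_general n r a e ν he hν
end

section
/- For the one-to-one infection network system in equilibrium-centered form, with Lyapunov function V = Σ_i a_i U(H_i, H_i*) + Σ_i (a_i/(e_i n_i)) U(P_i, P_i*), where U(x, x*) = x − x* − x* log(x/x*), one has dV/dt = −(Σ_i a_i H_i − Σ_i a_i H_i*)² ≤ 0 along every positive solution. -/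
open Finset

/-! Since `d/dt U(x, c) = (x - c) x'/x`, every equation of the form `x' = x g` turns `U(x, c)` into
a term with derivative `(x - c) g`. With `g_i = Σ_j a_j (H_j* - H_j) + P_i* - P_i` for the hosts and
`g_i = e_i n_i (H_i - H_i*)` for the parasites, the weights `a_i / (e_i n_i)` make the parasite terms
cancel the `P_i* - P_i` part of the host terms, leaving `(Σ_i a_i (H_i - H_i*)) · Σ_j a_j (H_j* - H_j)`. -/

theorem HasDerivAt.volterra_of_eq_mul {f : ℝ → ℝ} {g c t : ℝ}
    (hf : HasDerivAt f (f t * g) t) (hft : f t ≠ 0) :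
    HasDerivAt (fun s => f s - c - c * Real.log (f s / c)) ((f t - c) * g) t := by
  rcases eq_or_ne c 0 with rfl | hc
  · simpa using hf
  have hlog : HasDerivAt (fun s => Real.log (f s / c)) g t := by
    refine ((hf.div_const c).log (div_ne_zero hft hc)).congr_deriv ?_
    field_simp
  exact ((hf.sub_const c).fun_sub (hlog.const_mul c)).congr_deriv (by ring)

theorem statement18_general
    (n : ℕ) (a e ν Hs Ps : ℕ → ℝ)
    (he : ∀ i < n, 0 < e i) (hν : ∀ i < n, 0 < ν i)
    (H P : ℝ → ℕ → ℝ)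
    (hpos : ∀ t, ∀ i < n, 0 < H t i ∧ 0 < P t i)
    (hH : ∀ t, ∀ i < n, HasDerivAt (fun s => H s i)
      (H t i * ((∑ j ∈ Finset.range n, a j * (Hs j - H t j)) + Ps i - P t i)) t)
    (hP : ∀ t, ∀ i < n, HasDerivAt (fun s => P s i)
      (e i * ν i * P t i * (H t i - Hs i)) t) :
    ∀ t : ℝ,
      HasDerivAt (fun s =>
          (∑ i ∈ Finset.range n, a i * (H s i - Hs i - Hs i * Real.log (H s i / Hs i)))
          + ∑ i ∈ Finset.range n,
              a i / (e i * ν i) * (P s i - Ps i - Ps i * Real.log (P s i / Ps i)))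
        (-((∑ i ∈ Finset.range n, a i * H t i) - ∑ i ∈ Finset.range n, a i * Hs i) ^ 2) t ∧
      -((∑ i ∈ Finset.range n, a i * H t i) - ∑ i ∈ Finset.range n, a i * Hs i) ^ 2 ≤ 0 := by
  intro t
  refine ⟨?_, neg_nonpos.mpr (sq_nonneg _)⟩
  set S := ∑ j ∈ range n, a j * (Hs j - H t j) with hS
  have hHV : ∀ i ∈ range n, HasDerivAt
      (fun s => a i * (H s i - Hs i - Hs i * Real.log (H s i / Hs i)))
      (a i * ((H t i - Hs i) * (S + Ps i - P t i))) t := fun i hi =>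
    ((hH t i (mem_range.1 hi)).volterra_of_eq_mul (hpos t i (mem_range.1 hi)).1.ne').const_mul _
  have hPV : ∀ i ∈ range n, HasDerivAt
      (fun s => a i / (e i * ν i) * (P s i - Ps i - Ps i * Real.log (P s i / Ps i)))
      (a i * ((P t i - Ps i) * (H t i - Hs i))) t := by
    intro i hi'
    have hi := mem_range.1 hi'
    have hPi : HasDerivAt (fun s => P s i) (P t i * (e i * ν i * (H t i - Hs i))) t :=
      (hP t i hi).congr_deriv (by ring)
    refine ((hPi.volterra_of_eq_mul (hpos t i hi).2.ne').const_mul _).congr_deriv ?_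
    field_simp [(he i hi).ne', (hν i hi).ne']
  refine ((HasDerivAt.fun_sum hHV).add (HasDerivAt.fun_sum hPV)).congr_deriv ?_
  have hS' : S = -((∑ i ∈ range n, a i * H t i) - ∑ i ∈ range n, a i * Hs i) := by
    rw [hS, ← sum_sub_distrib, ← sum_neg_distrib]
    exact sum_congr rfl fun i _ => by ring
  calc ∑ i ∈ range n, a i * ((H t i - Hs i) * (S + Ps i - P t i))
        + ∑ i ∈ range n, a i * ((P t i - Ps i) * (H t i - Hs i))
      = S * ((∑ i ∈ range n, a i * H t i) - ∑ i ∈ range n, a i * Hs i) := by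
        rw [← sum_add_distrib, ← sum_sub_distrib, mul_sum]
        exact sum_congr rfl fun i _ => by ring
    _ = _ := by rw [hS']; ring

/-- for the one-to-one infection network in equilibrium-centered form, the
Lyapunov function `V = Σ_i a_i U(H_i, H_i*) + Σ_i (a_i/(e_i n_i)) U(P_i, P_i*)` satisfies
`dV/dt = −(Σ_i a_i H_i − Σ_i a_i H_i*)² ≤ 0` along every positive solution. -/
theorem statement18
    (n : ℕ) (a e ν Hs Ps : ℕ → ℝ)
    (ha : ∀ i < n, 0 < a i) (he : ∀ i < n, 0 < e i) (hν : ∀ i < n, 0 < ν i)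
    (hHs : ∀ i < n, 0 < Hs i) (hPs : ∀ i < n, 0 < Ps i)
    (H P : ℝ → ℕ → ℝ)
    (hpos : ∀ t, ∀ i < n, 0 < H t i ∧ 0 < P t i)
    (hH : ∀ t, ∀ i < n, HasDerivAt (fun s => H s i)
      (H t i * ((∑ j ∈ Finset.range n, a j * (Hs j - H t j)) + Ps i - P t i)) t)
    (hP : ∀ t, ∀ i < n, HasDerivAt (fun s => P s i)
      (e i * ν i * P t i * (H t i - Hs i)) t) :
    ∀ t : ℝ,
      HasDerivAt (fun s =>
          (∑ i ∈ Finset.range n, a i * (H s i - Hs i - Hs i * Real.log (H s i / Hs i)))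
          + ∑ i ∈ Finset.range n,
              a i / (e i * ν i) * (P s i - Ps i - Ps i * Real.log (P s i / Ps i)))
        (-((∑ i ∈ Finset.range n, a i * H t i) - ∑ i ∈ Finset.range n, a i * Hs i) ^ 2) t ∧
      -((∑ i ∈ Finset.range n, a i * H t i) - ∑ i ∈ Finset.range n, a i * Hs i) ^ 2 ≤ 0 :=
  statement18_general n a e ν Hs Ps he hν H P hpos hH hP
end
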